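/- arXiv:0908.4547 — 3 statements merged into one kernel-verified Lean document; each statement's English description precedes it below -/
import Mathlib

section
/- There exists an uncountable set A of irrational numbers in (0,1) such that for every α ∈ A the sums Σ_{n ∈ V_{α,x}} 1/n are uniformly bounded over x ∈ [0,1): for each α ∈ A there is a constant K < ∞ with Σ_{n ∈ V_{α,x}} 1/n ≤ K for every x ∈ [0,1). -/
open MeasureTheory Filter
open scoped ENNReal

/-- The ±1 observable: +1 if `y mod 1 ∈ [0, 1/2]`, −1 otherwise. -/
noncomputable def birkhoffF (y : ℝ) : ℤ := if Int.fract y ≤ 1 / 2 then 1 else -1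

/-- Birkhoff sums `S_n(α,x) = ∑_{i=0}^{n-1} f(x + iα)`. -/
noncomputable def birkhoffS (α x : ℝ) (n : ℕ) : ℤ :=
  ∑ i ∈ Finset.range n, birkhoffF (x + i * α)

/-- Balanced times `V_{α,x}`. -/
noncomputable def balancedTimes (α x : ℝ) : Set ℕ :=
  {n : ℕ | 1 ≤ n ∧ birkhoffS α x n = 0}

/-- The Gauss map. -/
noncomputable def gaussMap (x : ℝ) : ℝ := Int.fract x⁻¹

/-- The `i`-th partial quotient of `α` (for `i ≥ 1`). -/
noncomputable def cfA (α : ℝ) (i : ℕ) : ℕ := ⌊(gaussMap^[i - 1] α)⁻¹⌋₊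

/-- `A_n(α) = a_1(α) + ⋯ + a_n(α)`. -/
noncomputable def cfSumA (α : ℝ) (n : ℕ) : ℕ := ∑ i ∈ Finset.Icc 1 n, cfA α i

/-- Denominators of convergents from a sequence of partial quotients. -/
def denomRec (c : ℕ → ℕ) : ℕ → ℕ
  | 0 => 1
  | 1 => c 1
  | n + 2 => c (n + 2) * denomRec c (n + 1) + denomRec c n

/-- `q_n(α)`. -/
noncomputable def cfQ (α : ℝ) : ℕ → ℕ := denomRec (cfA α)

/-- Upper density of a set of naturals. -/
noncomputable def upperDensity (S : Set ℕ) : ℝ :=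
  Filter.limsup
    (fun N => (∑ n ∈ Finset.Icc 1 N, Set.indicator S (fun _ => (1 : ℝ)) n) / N)
    Filter.atTop

/-- The Gauss measure on (0,1). -/
noncomputable def gaussMeasure : Measure ℝ :=
  (volume.restrict (Set.Ioo 0 1)).withDensity
    (fun x => ENNReal.ofReal (1 / ((1 + x) * Real.log 2)))

/-- Interleaved partial quotients `[2a_1, b_1, 2a_2, b_2, …]`. -/
def interleave (a b : ℕ → ℕ) (j : ℕ) : ℕ :=
  if j % 2 = 1 then 2 * a ((j + 1) / 2) else b (j / 2)

namespace Stmt2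

noncomputable def dd (y : ℝ) : ℤ := ⌊(2:ℝ)*y⌋ + ⌈(2:ℝ)*y⌉

lemma dd_mono : Monotone dd := fun a b hab =>
  add_le_add (Int.floor_le_floor (by linarith)) (Int.ceil_le_ceil (by linarith))

lemma dd_diff {a b : ℝ} (hab : a ≤ b) : ((dd b - dd a : ℤ) : ℝ) ≤ 4*(b-a) + 2 := by
  have h1 : (⌊(2:ℝ)*b⌋ : ℝ) ≤ 2*b := Int.floor_le _
  have h2 : (2:ℝ)*a - 1 < ⌊(2:ℝ)*a⌋ := Int.sub_one_lt_floor _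
  have h3 : (⌈(2:ℝ)*b⌉ : ℝ) < 2*b + 1 := Int.ceil_lt_add_one _
  have h4 : (2:ℝ)*a ≤ ⌈(2:ℝ)*a⌉ := Int.le_ceil _
  unfold dd; push_cast; linarith

lemma birkhoffF_eq (y : ℝ) :
    birkhoffF y = if dd y % 4 = 3 then -1 else 1 := by
  have h0 : (0:ℝ) ≤ Int.fract y := Int.fract_nonneg y
  have h1 : Int.fract y < 1 := Int.fract_lt_one y
  have hy : y = (⌊y⌋ : ℝ) + Int.fract y := (Int.floor_add_fract y).symm
  set a : ℤ := ⌊y⌋ with ha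
  set θ : ℝ := Int.fract y with hθdef
  have h2y : (2:ℝ)*y = 2*(a:ℝ) + 2*θ := by rw [hy]; ring
  unfold birkhoffF dd
  rcases le_or_gt θ (1/2) with hθ | hθ
  · rcases eq_or_lt_of_le h0 with h00 | h00
    · have hf : ⌊(2:ℝ)*y⌋ = 2*a := by
        rw [h2y, Int.floor_eq_iff]; constructor <;> push_cast <;> linarith
      have hc : ⌈(2:ℝ)*y⌉ = 2*a := by
        rw [h2y, Int.ceil_eq_iff]; constructor <;> push_cast <;> linarith
      rw [if_pos hθ, hf, hc, if_neg (by omega)]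
    · rcases eq_or_lt_of_le hθ with h05 | h05
      · have hf : ⌊(2:ℝ)*y⌋ = 2*a+1 := by
          rw [h2y, Int.floor_eq_iff]; constructor <;> push_cast <;> linarith
        have hc : ⌈(2:ℝ)*y⌉ = 2*a+1 := by
          rw [h2y, Int.ceil_eq_iff]; constructor <;> push_cast <;> linarith
        rw [if_pos hθ, hf, hc, if_neg (by omega)]
      · have hf : ⌊(2:ℝ)*y⌋ = 2*a := by
          rw [h2y, Int.floor_eq_iff]; constructor <;> push_cast <;> linarith
        have hc : ⌈(2:ℝ)*y⌉ = 2*a+1 := by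
          rw [h2y, Int.ceil_eq_iff]; constructor <;> push_cast <;> linarith
        rw [if_pos hθ, hf, hc, if_neg (by omega)]
  · have hf : ⌊(2:ℝ)*y⌋ = 2*a+1 := by
      rw [h2y, Int.floor_eq_iff]; constructor <;> push_cast <;> linarith
    have hc : ⌈(2:ℝ)*y⌉ = 2*a+2 := by
      rw [h2y, Int.ceil_eq_iff]; constructor <;> push_cast <;> linarith
    rw [if_neg (by linarith), hf, hc, if_pos (by omega)]

lemma birkhoffF_cases (y : ℝ) : birkhoffF y = 1 ∨ birkhoffF y = -1 := by
  unfold birkhoffF; split <;> simp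

lemma birkhoffF_int (y : ℝ) (n : ℤ) : birkhoffF (y + n) = birkhoffF y := by
  unfold birkhoffF; rw [Int.fract_add_intCast]

lemma birkhoffS_succ (α x : ℝ) (n : ℕ) :
    birkhoffS α x (n+1) = birkhoffS α x n + birkhoffF (x + n * α) :=
  Finset.sum_range_succ _ n

lemma birkhoffS_add (α x : ℝ) (a b : ℕ) :
    birkhoffS α x (a + b) = birkhoffS α x a + birkhoffS α (x + a * α) b := by
  unfold birkhoffS
  rw [Finset.sum_range_add]
  congr 1
  refine Finset.sum_congr rfl fun i _ => ?_
  congr 1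
  push_cast
  ring

lemma birkhoffS_int (α x : ℝ) (n : ℤ) (N : ℕ) :
    birkhoffS α (x + n) N = birkhoffS α x N := by
  unfold birkhoffS
  refine Finset.sum_congr rfl fun i _ => ?_
  rw [show x + (n:ℝ) + i*α = (x + i*α) + n by ring, birkhoffF_int]

lemma birkhoffS_parity (α x : ℝ) (n : ℕ) : birkhoffS α x n % 2 = (n : ℤ) % 2 := by
  induction n with
  | zero => rfl
  | succ n ih =>
    rw [birkhoffS_succ]
    rcases birkhoffF_cases (x + n*α) with h | h <;> rw [h] <;> push_cast <;> omega

lemma birkhoffS_ne_zero (α x : ℝ) {n : ℕ} (hn : Odd n) : birkhoffS α x n ≠ 0 := by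
  intro h
  have := birkhoffS_parity α x n
  rw [h] at this
  rcases hn with ⟨k, hk⟩
  subst hk; push_cast at this; omega

lemma birkhoffS_abs (α x : ℝ) (n : ℕ) : |birkhoffS α x n| ≤ (n:ℤ) := by
  induction n generalizing x with
  | zero => simp [birkhoffS]
  | succ n ih =>
    rw [birkhoffS_succ]
    have h2 := ih x
    rcases birkhoffF_cases (x + n*α) with h | h <;> rw [h] <;>
      · rw [abs_le] at *; push_cast; omega

/-- counting strict increases of a monotone ℤ-sequence -/
lemma card_increases_le (G : ℕ → ℤ) (N : ℕ) (hmono : ∀ j, G j ≤ G (j+1)) :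
    (((Finset.range N).filter (fun j => G j < G (j+1))).card : ℤ) ≤ G N - G 0 := by
  have : ((Finset.range N).filter (fun j => G j < G (j+1))).card
      = ∑ j ∈ (Finset.range N).filter (fun j => G j < G (j+1)), 1 := by simp
  rw [← Finset.sum_range_sub G N]
  calc (((Finset.range N).filter (fun j => G j < G (j+1))).card : ℤ)
      = ∑ j ∈ (Finset.range N).filter (fun j => G j < G (j+1)), (1:ℤ) := by simp
    _ ≤ ∑ j ∈ (Finset.range N).filter (fun j => G j < G (j+1)), (G (j+1) - G j) :=
        Finset.sum_le_sum (fun j hj => by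
          simp only [Finset.mem_filter] at hj; omega)
    _ ≤ ∑ j ∈ Finset.range N, (G (j+1) - G j) :=
        Finset.sum_le_sum_of_subset_of_nonneg (Finset.filter_subset _ _)
          (fun j _ _ => by have := hmono j; omega)

/-- harmonic sums grow at most like `4 s^{1/4}` -/
lemma harmonic_le (s : ℕ) :
    ∑ j ∈ Finset.Icc 1 s, (1/(j:ℝ)) ≤ 4 * Real.sqrt (Real.sqrt s) := by
  induction s with
  | zero => simp
  | succ s ih =>
    rw [Finset.sum_Icc_succ_top (by omega)]
    have key : (1:ℝ)/(s+1) ≤ 4 * (Real.sqrt (Real.sqrt (s+1)) - Real.sqrt (Real.sqrt s)) := by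
      set A := Real.sqrt (Real.sqrt (s:ℝ)) with hA
      set B := Real.sqrt (Real.sqrt ((s:ℝ)+1)) with hB
      have hs0 : (0:ℝ) ≤ s := by positivity
      have hs1 : (0:ℝ) ≤ (s:ℝ)+1 := by positivity
      have hA0 : 0 ≤ A := Real.sqrt_nonneg _
      have hB1 : 1 ≤ B := by
        rw [hB, Real.one_le_sqrt, Real.one_le_sqrt]; linarith
      have hAB : A ≤ B := Real.sqrt_le_sqrt (Real.sqrt_le_sqrt (by linarith))
      have hA44 : (A^2)^2 = (s:ℝ) := by
        rw [Real.sq_sqrt (Real.sqrt_nonneg _)]; exact Real.sq_sqrt hs0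
      have hB44 : (B^2)^2 = (s:ℝ)+1 := by
        rw [Real.sq_sqrt (Real.sqrt_nonneg _)]; exact Real.sq_sqrt hs1
      have e : (B-A)*((B+A)*(B^2+A^2)) = 1 := by
        have : (B-A)*((B+A)*(B^2+A^2)) = (B^2)^2 - (A^2)^2 := by ring
        rw [this, hA44, hB44]; ring
      have hBA : 0 ≤ B - A := by linarith
      have hB0 : 0 ≤ B := le_trans hA0 hAB
      have c1 : A^3 ≤ B^3 := pow_le_pow_left₀ hA0 hAB 3
      have c2 : A^2 ≤ B^2 := pow_le_pow_left₀ hA0 hAB 2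
      have c3 : B*A^2 ≤ B*B^2 := mul_le_mul_of_nonneg_left c2 hB0
      have c4 : A*B^2 ≤ B*B^2 := mul_le_mul_of_nonneg_right hAB (sq_nonneg B)
      have c5 : B^3 ≤ B^3 * B := le_mul_of_one_le_right (by positivity) hB1
      have h2 : (B+A)*(B^2+A^2) ≤ 4*(B^2)^2 := by nlinarith
      have h3 : (1:ℝ) ≤ (B-A)*(4*(B^2)^2) := by
        calc (1:ℝ) = (B-A)*((B+A)*(B^2+A^2)) := e.symm
        _ ≤ (B-A)*(4*(B^2)^2) := mul_le_mul_of_nonneg_left h2 hBA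
      rw [div_le_iff₀ (by positivity)]
      rw [hB44] at h3
      linarith
    push_cast
    push_cast at ih
    linarith

/-- sum of reciprocals of a finite set of positive integers of size ≤ s -/
lemma reciprocal_sum_le (F : Finset ℕ) (h0 : 0 ∉ F) (s : ℕ) (hs : F.card ≤ s) :
    ∑ j ∈ F, (1/(j:ℝ)) ≤ 4 * Real.sqrt (Real.sqrt s) + 1 := by
  rw [← Finset.sum_filter_add_sum_filter_not F (fun j => j ≤ s)]
  have h1 : ∑ j ∈ F.filter (fun j => j ≤ s), (1/(j:ℝ))
      ≤ ∑ j ∈ Finset.Icc 1 s, (1/(j:ℝ)) := by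
    apply Finset.sum_le_sum_of_subset_of_nonneg
    · intro j hj
      simp only [Finset.mem_filter] at hj
      rcases hj with ⟨hjF, hjs⟩
      have : j ≠ 0 := fun h => h0 (h ▸ hjF)
      exact Finset.mem_Icc.mpr ⟨by omega, hjs⟩
    · intro j _ _; positivity
  have h2 : ∑ j ∈ F.filter (fun j => ¬ j ≤ s), (1/(j:ℝ)) ≤ 1 := by
    have hcard : (F.filter (fun j => ¬ j ≤ s)).card ≤ s := le_trans (Finset.card_filter_le _ _) hs
    calc ∑ j ∈ F.filter (fun j => ¬ j ≤ s), (1/(j:ℝ))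
        ≤ ∑ _j ∈ F.filter (fun j => ¬ j ≤ s), (1/((s:ℝ)+1)) := by
          apply Finset.sum_le_sum
          intro j hj
          simp only [Finset.mem_filter, not_le] at hj
          apply one_div_le_one_div_of_le (by positivity)
          exact_mod_cast hj.2
      _ = (F.filter (fun j => ¬ j ≤ s)).card * (1/((s:ℝ)+1)) := by
          rw [Finset.sum_const, nsmul_eq_mul]
      _ ≤ s * (1/((s:ℝ)+1)) := by
          apply mul_le_mul_of_nonneg_right _ (by positivity)
          exact_mod_cast hcard
      _ ≤ 1 := by
          rw [mul_one_div, div_le_one (by positivity)]; linarith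
  have := harmonic_le s
  linarith

end Stmt2

section Step

variable {α : ℝ} {q Q : ℕ} {p : ℤ} {ε : ℝ} {P' : ℕ} {x : ℝ} {ℓ : ℤ}

namespace StepNS

variable (α q p ε x)

/-- block levels -/
noncomputable def Lv (j : ℕ) : ℤ := birkhoffS α x (q*j)
/-- block increments (reduced form) -/
noncomputable def sg (j : ℕ) : ℤ := birkhoffS α (x + (j:ℝ)*ε) q
/-- address sums -/
noncomputable def Gf (j : ℕ) : ℤ := ∑ i ∈ Finset.range q, Stmt2.dd (x + (j:ℝ)*ε + (i:ℝ)*α)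
/-- number of changes before j -/
noncomputable def ch (j : ℕ) : ℕ :=
  ((Finset.range j).filter (fun i => sg α q ε x i ≠ sg α q ε x (i+1))).card

end StepNS

open StepNS Stmt2

variable (hq3 : 3 ≤ q) (hodd : Odd q) (hqQ : q ≤ Q)
  (hqα : (q:ℝ) * α = (p:ℝ) + ε) (hε0 : 0 < ε)

omit hq3 hodd hqQ hε0 in
include hqα in
lemma sg_eq (j : ℕ) : birkhoffS α (x + ((q*j : ℕ):ℝ) * α) q = sg α q ε x j := by
  have h1 : x + ((q*j : ℕ):ℝ) * α = (x + (j:ℝ)*ε) + ((j*p : ℤ):ℝ) := by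
    push_cast
    rw [show (q:ℝ)*(j:ℝ)*α = (j:ℝ)*((q:ℝ)*α) by ring, hqα]
    ring
  rw [h1, birkhoffS_int]
  rfl

omit hq3 hodd hqQ hε0 in
include hqα in
lemma Lv_step (j : ℕ) : Lv α q x (j+1) = Lv α q x j + sg α q ε x j := by
  have : q*(j+1) = q*j + q := by ring
  rw [Lv, this, birkhoffS_add, ← sg_eq hqα j]
  rfl

omit hq3 hodd hqQ in
include hε0 in
lemma Gf_mono (j : ℕ) : Gf α q ε x j ≤ Gf α q ε x (j+1) := by
  apply Finset.sum_le_sum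
  intro i _
  apply dd_mono
  have : (j:ℝ) ≤ (j:ℝ)+1 := by linarith
  push_cast
  nlinarith [hε0]

omit hq3 hodd hqQ in
include hε0 in
lemma Gf_strict {j : ℕ} (h : sg α q ε x j ≠ sg α q ε x (j+1)) :
    Gf α q ε x j < Gf α q ε x (j+1) := by
  rcases lt_or_eq_of_le (Gf_mono hε0 j) with h' | h'
  · exact h'
  exfalso
  apply h
  have hterm : ∀ i ∈ Finset.range q,
      dd (x + ((j:ℕ):ℝ)*ε + (i:ℝ)*α) ≤ dd (x + (((j+1:ℕ)):ℝ)*ε + (i:ℝ)*α) := by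
    intro i _
    apply dd_mono
    push_cast
    nlinarith [hε0]
  have hdd := (Finset.sum_eq_sum_iff_of_le hterm).mp h'
  unfold sg birkhoffS
  apply Finset.sum_congr rfl
  intro i hi
  rw [birkhoffF_eq, birkhoffF_eq, hdd i hi]

omit hodd in
include hq3 hqQ hqα hε0 in
lemma chTot_le (hεQ : ε * Q ≤ 2*q) :
    ((Finset.range Q).filter (fun j => sg α q ε x j ≠ sg α q ε x (j+1))).card ≤ 10*q^2 := by
  have hsub : (Finset.range Q).filter (fun j => sg α q ε x j ≠ sg α q ε x (j+1))
      ⊆ (Finset.range Q).filter (fun j => Gf α q ε x j < Gf α q ε x (j+1)) := by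
    apply Finset.monotone_filter_right
    intro j _ hj
    exact Gf_strict hε0 hj
  have h1 := Finset.card_le_card hsub
  have h2 := Stmt2.card_increases_le (Gf α q ε x) Q (Gf_mono hε0)
  -- real bound on G Q - G 0
  have hterm : ∀ i ∈ Finset.range q,
      ((dd (x + ((Q:ℕ):ℝ)*ε + (i:ℝ)*α) :ℤ):ℝ) - ((dd (x + ((0:ℕ):ℝ)*ε + (i:ℝ)*α) :ℤ):ℝ)
        ≤ 4*((Q:ℝ)*ε) + 2 := by
    intro i _
    have hd := Stmt2.dd_diff (a := x + ((0:ℕ):ℝ)*ε + (i:ℝ)*α) (b := x + ((Q:ℕ):ℝ)*ε + (i:ℝ)*α)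
      (by push_cast; nlinarith [hε0, (Nat.cast_nonneg Q : (0:ℝ) ≤ Q)])
    push_cast at hd ⊢
    nlinarith [hd]
  have h3 : ((Gf α q ε x Q : ℤ):ℝ) - ((Gf α q ε x 0 :ℤ):ℝ) ≤ 10*q^2 := by
    unfold Gf
    rw [Int.cast_sum, Int.cast_sum, ← Finset.sum_sub_distrib]
    calc (∑ i ∈ Finset.range q,
            (((dd (x + ((Q:ℕ):ℝ)*ε + (i:ℝ)*α) :ℤ):ℝ) - ((dd (x + ((0:ℕ):ℝ)*ε + (i:ℝ)*α) :ℤ):ℝ)))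
        ≤ ∑ _i ∈ Finset.range q, (4*((Q:ℝ)*ε) + 2) := Finset.sum_le_sum hterm
      _ = q * (4*((Q:ℝ)*ε) + 2) := by
          rw [Finset.sum_const, Finset.card_range, nsmul_eq_mul]
      _ ≤ q * (4*(2*(q:ℝ)) + 2) := by
          apply mul_le_mul_of_nonneg_left _ (by positivity)
          have : (Q:ℝ)*ε ≤ 2*q := by rw [mul_comm]; exact hεQ
          linarith
      _ ≤ 10*(q:ℝ)^2 := by
          have hq1 : (1:ℝ) ≤ q := by exact_mod_cast le_trans (by norm_num) hq3
          nlinarith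
  have h4 : ((((Finset.range Q).filter
      (fun j => sg α q ε x j ≠ sg α q ε x (j+1))).card : ℤ) : ℝ) ≤ 10*q^2 := by
    calc ((((Finset.range Q).filter
        (fun j => sg α q ε x j ≠ sg α q ε x (j+1))).card : ℤ) : ℝ)
        ≤ ((((Finset.range Q).filter
            (fun j => Gf α q ε x j < Gf α q ε x (j+1))).card : ℤ) : ℝ) := by
          exact_mod_cast h1
      _ ≤ ((Gf α q ε x Q - Gf α q ε x 0 : ℤ):ℝ) := by exact_mod_cast h2
      _ ≤ 10*q^2 := by push_cast; push_cast at h3; linarith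
  exact_mod_cast h4

omit hq3 hodd hqQ hε0 in
lemma ch_mono {j j' : ℕ} (h : j ≤ j') : ch α q ε x j ≤ ch α q ε x j' :=
  Finset.card_le_card (Finset.filter_subset_filter _ (Finset.range_subset_range.mpr h))

omit hq3 hodd hqQ hε0 in
lemma ch_succ (j : ℕ) : ch α q ε x (j+1)
    = ch α q ε x j + (if sg α q ε x j ≠ sg α q ε x (j+1) then 1 else 0) := by
  unfold ch
  rw [Finset.range_add_one, Finset.filter_insert]
  split
  · rw [Finset.card_insert_of_notMem (fun h => by
      simp only [Finset.mem_filter, Finset.mem_range] at h; omega)]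
  · omega

omit hq3 hodd hqQ in
include hqα hε0 in
lemma walk_run : ∀ j j', j ≤ j' → ch α q ε x j = ch α q ε x j' →
    sg α q ε x j' = sg α q ε x j ∧
    Lv α q x j' = Lv α q x j + ((j' - j : ℕ) : ℤ) * sg α q ε x j := by
  intro j j' hle hch
  induction j' , hle using Nat.le_induction with
  | base => simp
  | succ i hji ih =>
    have hch_i : ch α q ε x j = ch α q ε x i := by
      have h1 := ch_mono (α := α) (q := q) (ε := ε) (x := x) hji
      have h2 := ch_mono (α := α) (q := q) (ε := ε) (x := x) (show i ≤ i+1 by omega)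
      omega
    obtain ⟨hsg, hLv⟩ := ih hch_i
    have hnochange : sg α q ε x i = sg α q ε x (i+1) := by
      have := ch_succ (α := α) (q := q) (ε := ε) (x := x) i
      rw [← hch_i, ← hch] at this
      by_contra hne
      rw [if_pos hne] at this
      omega
    constructor
    · rw [← hnochange, hsg]
    · rw [Lv_step hqα, hLv, hsg, Nat.succ_sub hji]
      push_cast
      ring

include hqα hε0 hodd hq3 hqQ in
lemma band_card (hεQ : ε * Q ≤ 2*q) :
    ((Finset.range Q).filter (fun j => |ℓ - Lv α q x j| ≤ (q:ℤ) - 1)).card ≤ 22*q^3 := by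
  classical
  set Band := (Finset.range Q).filter (fun j => |ℓ - Lv α q x j| ≤ (q:ℤ) - 1) with hBand
  set CT := ((Finset.range Q).filter (fun j => sg α q ε x j ≠ sg α q ε x (j+1))).card with hCT
  have hCTle : CT ≤ 10*q^2 := chTot_le hq3 hqQ hqα hε0 hεQ
  have hmaps : ∀ j ∈ Band, (ch α q ε x j, Lv α q x j)
      ∈ (Finset.Icc 0 CT) ×ˢ (Finset.Icc (ℓ-((q:ℤ)-1)) (ℓ+((q:ℤ)-1))) := by
    intro j hj
    simp only [hBand, Finset.mem_filter, Finset.mem_range] at hj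
    obtain ⟨hjQ, habs⟩ := hj
    rw [Finset.mem_product]
    constructor
    · rw [Finset.mem_Icc]
      refine ⟨Nat.zero_le _, ?_⟩
      rw [hCT]
      exact ch_mono (le_of_lt hjQ)
    · rw [Finset.mem_Icc]
      rw [abs_le] at habs
      omega
  have hinj : Set.InjOn (fun j => (ch α q ε x j, Lv α q x j)) ↑Band := by
    intro a ha b hb hab
    simp only [Prod.mk.injEq] at hab
    by_contra hne
    rcases Nat.lt_or_ge a b with h | h
    · obtain ⟨_, hL⟩ := walk_run hqα hε0 a b (le_of_lt h) hab.1
      have hσ : sg α q ε x a ≠ 0 := birkhoffS_ne_zero α _ hodd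
      have : ((b - a : ℕ) : ℤ) ≠ 0 := by
        have : 0 < b - a := by omega
        exact_mod_cast Nat.pos_iff_ne_zero.mp this
      rw [hab.2] at hL
      have := mul_ne_zero this hσ
      omega
    · rcases Nat.lt_or_ge b a with h' | h'
      · obtain ⟨_, hL⟩ := walk_run hqα hε0 b a (le_of_lt h') hab.1.symm
        have hσ : sg α q ε x b ≠ 0 := birkhoffS_ne_zero α _ hodd
        have : ((a - b : ℕ) : ℤ) ≠ 0 := by
          have : 0 < a - b := by omega
          exact_mod_cast Nat.pos_iff_ne_zero.mp this
        rw [← hab.2] at hL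
        have := mul_ne_zero this hσ
        omega
      · omega
  have hcard := Finset.card_le_card_of_injOn _ hmaps hinj
  rw [Finset.card_product, Nat.card_Icc, Int.card_Icc] at hcard
  have hq1 : 1 ≤ q := by omega
  have htoNat : (ℓ + ((q:ℤ)-1) + 1 - (ℓ - ((q:ℤ)-1))).toNat = 2*q - 1 := by omega
  rw [htoNat] at hcard
  calc Band.card ≤ (CT + 1 - 0) * (2*q - 1) := hcard
    _ ≤ (10*q^2 + 1) * (2*q) := by
        apply Nat.mul_le_mul <;> omega
    _ ≤ 22*q^3 := by nlinarith [hq1]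

end Step

section Step2

variable {α : ℝ} {q Q : ℕ} {p : ℤ} {ε : ℝ} {P' : ℕ} {x : ℝ} {ℓ : ℤ}

open StepNS Stmt2

/-- fiber of the block decomposition -/
lemma fiber_card_le
    (hq3 : 3 ≤ q)
    (hcnt : ∀ y ℓ', (((Finset.range q).filter (fun n => birkhoffS α y n = ℓ')).card ≤ P'))
    (j : ℕ) :
    (((Finset.range Q).filter (fun n => birkhoffS α x n = ℓ)).filter (fun n => n / q = j)).card
      ≤ if |ℓ - Lv α q x j| ≤ (q:ℤ) - 1 then P' else 0 := by
  classical
  have hq0 : 0 < q := by omega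
  set F := ((Finset.range Q).filter (fun n => birkhoffS α x n = ℓ)).filter (fun n => n / q = j)
    with hF
  have hmem : ∀ n ∈ F, n = q*j + n % q ∧ n % q < q ∧
      birkhoffS α (x + ((q*j : ℕ):ℝ) * α) (n % q) = ℓ - Lv α q x j := by
    intro n hn
    simp only [hF, Finset.mem_filter, Finset.mem_range] at hn
    obtain ⟨⟨hnQ, hnS⟩, hnj⟩ := hn
    have hdm : q*j + n % q = n := by rw [← hnj]; exact Nat.div_add_mod n q
    refine ⟨hdm.symm, Nat.mod_lt _ hq0, ?_⟩
    have := birkhoffS_add α x (q*j) (n % q)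
    rw [hdm, hnS] at this
    rw [← Lv] at this
    omega
  split
  case isTrue hband =>
    apply le_trans _ (hcnt (x + ((q*j : ℕ):ℝ) * α) (ℓ - Lv α q x j))
    apply Finset.card_le_card_of_injOn (fun n => n % q)
    · intro n hn
      obtain ⟨_, h2, h3⟩ := hmem n hn
      exact Finset.mem_filter.mpr ⟨Finset.mem_range.mpr h2, h3⟩
    · intro a ha b hb hab
      obtain ⟨ha1, _, _⟩ := hmem a ha
      obtain ⟨hb1, _, _⟩ := hmem b hb
      simp only at hab
      omega
  case isFalse hband =>
    rw [Nat.le_zero, Finset.card_eq_zero]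
    rw [Finset.eq_empty_iff_forall_notMem]
    intro n hn
    obtain ⟨_, h2, h3⟩ := hmem n hn
    apply hband
    rw [← h3]
    have := birkhoffS_abs α (x + ((q*j : ℕ):ℝ) * α) (n % q)
    have h4 : ((n % q : ℕ):ℤ) ≤ (q:ℤ) - 1 := by
      have : ((n % q : ℕ):ℤ) < (q:ℤ) := by exact_mod_cast h2
      omega
    omega

/-- Count step : zeros (visits to any level ℓ) in `[0, Q)` -/
lemma count_step
    (hq3 : 3 ≤ q) (hodd : Odd q) (hqQ : q ≤ Q)
    (hqα : (q:ℝ) * α = (p:ℝ) + ε) (hε0 : 0 < ε) (hεQ : ε * Q ≤ 2*q)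
    (hcnt : ∀ y ℓ', (((Finset.range q).filter (fun n => birkhoffS α y n = ℓ')).card ≤ P')) :
    ((Finset.range Q).filter (fun n => birkhoffS α x n = ℓ)).card ≤ 22*q^3*P' := by
  classical
  have hq0 : 0 < q := by omega
  have hdecomp := Finset.card_eq_sum_card_fiberwise
    (f := fun n => n / q) (s := (Finset.range Q).filter (fun n => birkhoffS α x n = ℓ))
    (t := Finset.range Q)
    (fun n hn => by
      simp only [Finset.coe_filter, Set.mem_setOf_eq, Finset.mem_coe, Finset.mem_filter, Finset.mem_range] at hn ⊢
      exact lt_of_le_of_lt (Nat.div_le_self n q) hn.1)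
  rw [hdecomp]
  calc ∑ j ∈ Finset.range Q,
        (((Finset.range Q).filter (fun n => birkhoffS α x n = ℓ)).filter (fun n => n / q = j)).card
      ≤ ∑ j ∈ Finset.range Q, (if |ℓ - Lv α q x j| ≤ (q:ℤ) - 1 then P' else 0) :=
        Finset.sum_le_sum (fun j _ => fiber_card_le hq3 hcnt j)
    _ = ∑ j ∈ (Finset.range Q).filter (fun j => |ℓ - Lv α q x j| ≤ (q:ℤ) - 1), P' :=
        (Finset.sum_filter _ _).symm
    _ = ((Finset.range Q).filter (fun j => |ℓ - Lv α q x j| ≤ (q:ℤ) - 1)).card * P' := by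
        rw [Finset.sum_const, smul_eq_mul]
    _ ≤ 22*q^3*P' := by
        apply Nat.mul_le_mul_right
        exact band_card hq3 hodd hqQ hqα hε0 hεQ

/-- Weighted step : harmonic-weighted visits in `[1, Q)` -/
lemma weighted_step
    (hq3 : 3 ≤ q) (hodd : Odd q) (hqQ : q ≤ Q)
    (hqα : (q:ℝ) * α = (p:ℝ) + ε) (hε0 : 0 < ε) (hεQ : ε * Q ≤ 2*q)
    (hcnt : ∀ y ℓ', (((Finset.range q).filter (fun n => birkhoffS α y n = ℓ')).card ≤ P'))
    {Φ' : ℝ}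
    (hws : ∀ y ℓ', (∑ n ∈ Finset.Ico 1 q, if birkhoffS α y n = ℓ' then (1/(n:ℝ)) else 0) ≤ Φ') :
    (∑ n ∈ Finset.Ico 1 Q, if birkhoffS α x n = ℓ then (1/(n:ℝ)) else 0)
      ≤ Φ' + (P' : ℝ)/q * (4 * Real.sqrt (Real.sqrt ((22*q^3 : ℕ))) + 1) := by
  classical
  have hq0 : 0 < q := by omega
  set g : ℕ → ℝ := fun n => if birkhoffS α x n = ℓ then (1/(n:ℝ)) else 0 with hg
  have hdecomp := Finset.sum_fiberwise_of_maps_to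
    (g := fun n => n / q) (s := Finset.Ico 1 Q) (t := Finset.range Q)
    (fun n hn => by
      simp only [Finset.mem_Ico] at hn
      simp only [Finset.mem_range]
      exact lt_of_le_of_lt (Nat.div_le_self n q) hn.2) g
  rw [← hdecomp]
  have h0mem : (0:ℕ) ∈ Finset.range Q := Finset.mem_range.mpr (by omega)
  rw [← Finset.sum_erase_add _ _ h0mem]
  have hfib0 : (Finset.Ico 1 Q).filter (fun n => n / q = 0) = Finset.Ico 1 q := by
    ext n
    simp only [Finset.mem_filter, Finset.mem_Ico]
    constructor
    · rintro ⟨⟨h1, _⟩, h3⟩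
      exact ⟨h1, (Nat.div_eq_zero_iff_lt hq0).mp h3⟩
    · rintro ⟨h1, h2⟩
      exact ⟨⟨h1, lt_of_lt_of_le h2 hqQ⟩, (Nat.div_eq_zero_iff_lt hq0).mpr h2⟩
  have hS0 : ∑ n ∈ (Finset.Ico 1 Q).filter (fun n => n / q = 0), g n ≤ Φ' := by
    rw [hfib0]; exact hws x ℓ
  set Band := (Finset.range Q).filter (fun j => |ℓ - Lv α q x j| ≤ (q:ℤ) - 1) with hBandDef
  have hBandCard : Band.card ≤ 22*q^3 := band_card hq3 hodd hqQ hqα hε0 hεQ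
  have hfibj : ∀ j ∈ (Finset.range Q).erase 0,
      ∑ n ∈ (Finset.Ico 1 Q).filter (fun n => n / q = j), g n
        ≤ (if j ∈ Band then (P':ℝ)/q * (1/(j:ℝ)) else 0) := by
    intro j hj
    obtain ⟨hjne, hjQ⟩ := Finset.mem_erase.mp hj
    have hj1 : 1 ≤ j := by omega
    have hqj0 : (0:ℝ) < (q:ℝ)*j := by
      have : (1:ℝ) ≤ (j:ℝ) := by exact_mod_cast hj1
      have : (0:ℝ) < q := by exact_mod_cast hq0
      positivity
    have hstep1 : ∑ n ∈ (Finset.Ico 1 Q).filter (fun n => n / q = j), g n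
        ≤ ∑ n ∈ (Finset.Ico 1 Q).filter (fun n => n / q = j),
            (if birkhoffS α x n = ℓ then (1/((q:ℝ)*j)) else 0) := by
      apply Finset.sum_le_sum
      intro n hn
      simp only [Finset.mem_filter, Finset.mem_Ico] at hn
      obtain ⟨⟨hn1, hn2⟩, hnj⟩ := hn
      rw [hg]; dsimp only
      split
      · apply one_div_le_one_div_of_le hqj0
        rw [← hnj]
        calc (q:ℝ)*((n/q : ℕ):ℝ) = ((q * (n/q) : ℕ) : ℝ) := by push_cast; ring
          _ ≤ n := by exact_mod_cast Nat.mul_div_le n q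
      · exact le_refl 0
    have hstep2 : ∑ n ∈ (Finset.Ico 1 Q).filter (fun n => n / q = j),
          (if birkhoffS α x n = ℓ then (1/((q:ℝ)*j)) else 0)
        = ((((Finset.Ico 1 Q).filter (fun n => n / q = j)).filter
            (fun n => birkhoffS α x n = ℓ)).card : ℝ) * (1/((q:ℝ)*j)) := by
      rw [← Finset.sum_filter, Finset.sum_const, nsmul_eq_mul]
    have hsub : (((Finset.Ico 1 Q).filter (fun n => n / q = j)).filter
            (fun n => birkhoffS α x n = ℓ))
        ⊆ (((Finset.range Q).filter (fun n => birkhoffS α x n = ℓ)).filter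
            (fun n => n / q = j)) := by
      intro n hn
      simp only [Finset.mem_filter, Finset.mem_Ico, Finset.mem_range] at hn ⊢
      tauto
    have hcard2 := le_trans (Finset.card_le_card hsub) (fiber_card_le hq3 hcnt j)
    have hite : (if |ℓ - Lv α q x j| ≤ (q:ℤ) - 1 then P' else 0)
        = (if j ∈ Band then P' else 0) := by
      have : j ∈ Band ↔ |ℓ - Lv α q x j| ≤ (q:ℤ) - 1 := by
        rw [hBandDef, Finset.mem_filter]
        constructor
        · rintro ⟨_, h⟩; exact h
        · intro h; exact ⟨hjQ, h⟩
      split <;> split <;> tauto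
    rw [hite] at hcard2
    calc ∑ n ∈ (Finset.Ico 1 Q).filter (fun n => n / q = j), g n
        ≤ ((((Finset.Ico 1 Q).filter (fun n => n / q = j)).filter
            (fun n => birkhoffS α x n = ℓ)).card : ℝ) * (1/((q:ℝ)*j)) := by
          rw [← hstep2]; exact hstep1
      _ ≤ ((if j ∈ Band then P' else 0 : ℕ) : ℝ) * (1/((q:ℝ)*j)) := by
          apply mul_le_mul_of_nonneg_right _ (by positivity)
          exact_mod_cast hcard2
      _ = (if j ∈ Band then (P':ℝ)/q * (1/(j:ℝ)) else 0) := by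
          split
          · push_cast
            field_simp
          · simp
  have hrest : ∑ j ∈ (Finset.range Q).erase 0,
      (∑ n ∈ (Finset.Ico 1 Q).filter (fun n => n / q = j), g n)
        ≤ (P' : ℝ)/q * (4 * Real.sqrt (Real.sqrt ((22*q^3 : ℕ))) + 1) := by
    calc ∑ j ∈ (Finset.range Q).erase 0,
        (∑ n ∈ (Finset.Ico 1 Q).filter (fun n => n / q = j), g n)
        ≤ ∑ j ∈ (Finset.range Q).erase 0,
            (if j ∈ Band then (P':ℝ)/q * (1/(j:ℝ)) else 0) := Finset.sum_le_sum hfibj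
      _ = ∑ j ∈ ((Finset.range Q).erase 0).filter (fun j => j ∈ Band),
            (P':ℝ)/q * (1/(j:ℝ)) := (Finset.sum_filter _ _).symm
      _ = ∑ j ∈ Band.erase 0, (P':ℝ)/q * (1/(j:ℝ)) := by
          congr 1
          ext j
          simp only [Finset.mem_filter, Finset.mem_erase, hBandDef, Finset.mem_range]
          tauto
      _ = (P':ℝ)/q * (∑ j ∈ Band.erase 0, (1/(j:ℝ))) := by rw [Finset.mul_sum]
      _ ≤ (P' : ℝ)/q * (4 * Real.sqrt (Real.sqrt ((22*q^3 : ℕ))) + 1) := by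
          apply mul_le_mul_of_nonneg_left _ (by positivity)
          apply Stmt2.reciprocal_sum_le
          · exact Finset.notMem_erase 0 Band
          · exact le_trans (Finset.card_le_card (Finset.erase_subset _ _)) hBandCard
  linarith

end Step2

namespace Stmt2C

/-- the recursively-defined denominators -/
def mseq (t : ℕ → Bool) : ℕ → ℕ
  | 0 => 3
  | k+1 => (4^(2*k+12) * (mseq t k)^(24*k+50) + 1 + 2 * (cond (t k) 1 0)) * mseq t k

/-- the multiplier -/
def cs (t : ℕ → Bool) (k : ℕ) : ℕ :=
  4^(2*k+12) * (mseq t k)^(24*k+50) + 1 + 2 * (cond (t k) 1 0)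

variable (t : ℕ → Bool)

lemma mseq_zero : mseq t 0 = 3 := rfl

lemma mseq_succ (k : ℕ) : mseq t (k+1) = cs t k * mseq t k := rfl

attribute [irreducible] mseq

lemma mseq_three_le (k : ℕ) : 3 ≤ mseq t k := by
  induction k with
  | zero => rw [mseq_zero]
  | succ k ih =>
    rw [mseq_succ]
    calc 3 ≤ mseq t k := ih
      _ ≤ cs t k * mseq t k := Nat.le_mul_of_pos_left _ (by unfold cs; positivity)

lemma mseq_pos (k : ℕ) : 0 < mseq t k := by have := mseq_three_le t k; omega

lemma cs_big (k : ℕ) : 4^(2*k+12) ≤ cs t k := by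
  unfold cs
  have h1 : 1 ≤ (mseq t k)^(24*k+50) := Nat.one_le_pow _ _ (mseq_pos t k)
  calc 4^(2*k+12) = 4^(2*k+12) * 1 := by ring
    _ ≤ 4^(2*k+12) * (mseq t k)^(24*k+50) := Nat.mul_le_mul_left _ h1
    _ ≤ _ := by omega

lemma cs_five_le (k : ℕ) : 5 ≤ cs t k := by
  have := cs_big t k
  have : (4:ℕ)^12 ≤ 4^(2*k+12) := Nat.pow_le_pow_right (by norm_num) (by omega)
  have : (5:ℕ) ≤ 4^12 := by norm_num
  omega

lemma mseq_growth (k : ℕ) : 5 * mseq t k ≤ mseq t (k+1) := by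
  rw [mseq_succ]
  exact Nat.mul_le_mul_right _ (cs_five_le t k)

lemma mseq_mono : Monotone (mseq t) := by
  apply monotone_nat_of_le_succ
  intro k
  have := mseq_growth t k
  have := mseq_pos t k
  omega

lemma mseq_odd (k : ℕ) : Odd (mseq t k) := by
  induction k with
  | zero => rw [mseq_zero]; exact ⟨1, rfl⟩
  | succ k ih =>
    rw [mseq_succ]
    apply Odd.mul _ ih
    unfold cs
    have heven : Even (4^(2*k+12) * (mseq t k)^(24*k+50)) := by
      apply Even.mul_right
      rw [Nat.even_pow]
      exact ⟨by decide, by omega⟩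
    rcases heven with ⟨a, ha⟩
    rw [ha, Nat.odd_iff]
    rcases t k with _ | _ <;> simp only [Bool.cond_false, Bool.cond_true] <;> omega

lemma mseq_ge_pow (k : ℕ) : 5^k ≤ mseq t k := by
  induction k with
  | zero => rw [mseq_zero]; norm_num
  | succ k ih =>
    calc 5^(k+1) = 5 * 5^k := by ring
      _ ≤ 5 * mseq t k := Nat.mul_le_mul_left 5 ih
      _ ≤ mseq t (k+1) := mseq_growth t k

lemma mseq_dvd {j k : ℕ} (h : j ≤ k) : mseq t j ∣ mseq t k := by
  induction k with
  | zero =>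
    have : j = 0 := by omega
    subst this; rfl
  | succ k ih =>
    rcases Nat.lt_or_ge j (k+1) with h' | h'
    · have := ih (by omega)
      rw [mseq_succ]
      exact this.mul_left _
    · have : j = k+1 := by omega
      subst this; rfl

/-- the irrational numbers (parametrized by `t`) -/
noncomputable def alphaF : ℝ := ∑' j, (1/(mseq t j) : ℝ)

lemma summable_tail (k : ℕ) : Summable (fun i => (1/(mseq t (i + k)) : ℝ)) := by
  apply Summable.of_nonneg_of_le (f := fun i => (1/5:ℝ)^i) (fun i => by positivity)
  · intro i
    have h1 : (5:ℕ)^i ≤ mseq t (i+k) :=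
      le_trans (Nat.pow_le_pow_right (by norm_num) (by omega)) (mseq_ge_pow t (i+k))
    have h2 : (0:ℝ) < 5^i := by positivity
    rw [show ((1:ℝ)/5)^i = 1/5^i by rw [one_div_pow]]
    apply one_div_le_one_div_of_le h2
    exact_mod_cast h1
  · exact summable_geometric_of_lt_one (by norm_num) (by norm_num)

lemma summable_alpha : Summable (fun j => (1/(mseq t j) : ℝ)) := by
  have := summable_tail t 0
  simpa using this

/-- the tails -/
noncomputable def Tail (k : ℕ) : ℝ := ∑' i, (1/(mseq t (i + (k+1))) : ℝ)

lemma alpha_head_tail (k : ℕ) :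
    alphaF t = (∑ j ∈ Finset.range (k+1), (1/(mseq t j) : ℝ)) + Tail t k := by
  rw [alphaF, Tail, ← Summable.sum_add_tsum_nat_add (k+1) (summable_alpha t)]

lemma Tail_pos (k : ℕ) : 0 < Tail t k := by
  have h := Summable.le_tsum (summable_tail t (k+1)) 0 (fun j _ => by positivity)
  have h2 : (0:ℝ) < 1/(mseq t (0 + (k+1))) := by
    apply one_div_pos.mpr
    exact_mod_cast mseq_pos t (0 + (k+1))
  exact lt_of_lt_of_le h2 h

lemma Tail_le (k : ℕ) : Tail t k ≤ 2/(mseq t (k+1)) := by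
  have hsum : Summable (fun i => ((1/5:ℝ)^i) * (1/(mseq t (k+1)))) :=
    (summable_geometric_of_lt_one (by norm_num) (by norm_num)).mul_right _
  have hle : ∀ i, (1/(mseq t (i + (k+1))) : ℝ) ≤ ((1/5:ℝ)^i) * (1/(mseq t (k+1))) := by
    intro i
    have h1 : (5:ℕ)^i * mseq t (k+1) ≤ mseq t (i + (k+1)) := by
      induction i with
      | zero => simp
      | succ i ih =>
        calc 5^(i+1) * mseq t (k+1) = 5 * (5^i * mseq t (k+1)) := by ring
          _ ≤ 5 * mseq t (i + (k+1)) := Nat.mul_le_mul_left 5 ih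
          _ ≤ mseq t (i + (k+1) + 1) := mseq_growth t _
          _ = mseq t ((i+1) + (k+1)) := by congr 1; omega
    have h2 : (0:ℝ) < (5:ℝ)^i * mseq t (k+1) := by
      apply mul_pos (by positivity)
      exact_mod_cast mseq_pos t (k+1)
    rw [show ((1:ℝ)/5)^i * (1/(mseq t (k+1))) = 1/((5:ℝ)^i * mseq t (k+1)) by
      rw [one_div_pow]; ring]
    apply one_div_le_one_div_of_le h2
    exact_mod_cast h1
  calc Tail t k ≤ ∑' i, ((1/5:ℝ)^i) * (1/(mseq t (k+1))) :=
        Summable.tsum_le_tsum hle (summable_tail t (k+1)) hsum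
    _ = (∑' i, ((1/5:ℝ)^i)) * (1/(mseq t (k+1))) := tsum_mul_right
    _ = (5/4) * (1/(mseq t (k+1))) := by
        rw [tsum_geometric_of_lt_one (by norm_num) (by norm_num)]
        norm_num
    _ ≤ 2/(mseq t (k+1)) := by
        have h0 : (0:ℝ) < mseq t (k+1) := by exact_mod_cast mseq_pos t (k+1)
        have h1 : (0:ℝ) ≤ 1/((mseq t (k+1)):ℝ) := le_of_lt (one_div_pos.mpr h0)
        rw [div_eq_mul_one_div (2:ℝ)]
        linarith

/-- numerators -/
noncomputable def pint (k : ℕ) : ℤ := ∑ j ∈ Finset.range (k+1), ((mseq t k / mseq t j : ℕ) : ℤ)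

/-- the scale-k shift -/
noncomputable def epsk (k : ℕ) : ℝ := (mseq t k : ℝ) * Tail t k

lemma epsk_pos (k : ℕ) : 0 < epsk t k := by
  have h1 := Tail_pos t k
  have h2 := mseq_pos t k
  have h2' : (0:ℝ) < mseq t k := by exact_mod_cast h2
  exact mul_pos h2' h1

lemma epsk_key (k : ℕ) : (mseq t k : ℝ) * alphaF t = (pint t k : ℝ) + epsk t k := by
  rw [alpha_head_tail t k, mul_add, epsk]
  congr 1
  rw [Finset.mul_sum, pint, Int.cast_sum]
  apply Finset.sum_congr rfl
  intro j hj
  have hdvd : mseq t j ∣ mseq t k := mseq_dvd t (by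
    simp only [Finset.mem_range] at hj; omega)
  have hne : ((mseq t j : ℕ):ℝ) ≠ 0 := by
    have : (0:ℝ) < mseq t j := by exact_mod_cast mseq_pos t j
    linarith
  rw [Int.cast_natCast, Nat.cast_div hdvd hne]
  ring

lemma epsk_bound (k : ℕ) : epsk t k * (mseq t (k+1)) ≤ 2 * mseq t k := by
  have h1 := Tail_le t k
  have h2 : (0:ℝ) < mseq t (k+1) := by exact_mod_cast mseq_pos t (k+1)
  have h3 : (0:ℝ) ≤ mseq t k := Nat.cast_nonneg _
  unfold epsk
  calc (mseq t k : ℝ) * Tail t k * (mseq t (k+1))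
      ≤ (mseq t k : ℝ) * (2/(mseq t (k+1))) * (mseq t (k+1)) := by
        apply mul_le_mul_of_nonneg_right _ (le_of_lt h2)
        exact mul_le_mul_of_nonneg_left h1 h3
    _ = 2 * mseq t k := by
        have hne : ((mseq t (k+1)):ℝ) ≠ 0 := ne_of_gt h2
        field_simp
  
end Stmt2C

namespace Stmt2C

variable (t : ℕ → Bool)

/-- the count bounds -/
def Pseq (t : ℕ → Bool) : ℕ → ℕ
  | 0 => 1782
  | k+1 => 22*(mseq t (k+1))^3 * Pseq t k

lemma Pseq_pos (k : ℕ) : 0 < Pseq t k := by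
  induction k with
  | zero => norm_num [Pseq]
  | succ k ih =>
    have := mseq_pos t (k+1)
    have : 0 < (mseq t (k+1))^3 := by positivity
    calc 0 < 1 * 1 * 1 := by norm_num
      _ ≤ 22*(mseq t (k+1))^3 * Pseq t k := by
          apply Nat.mul_le_mul (Nat.mul_le_mul (by norm_num) (by omega)) (by omega)
      _ = Pseq t (k+1) := rfl

lemma m_ge_22 (k : ℕ) : 22 ≤ mseq t (k+1) := by
  rw [mseq_succ]
  have h1 := cs_big t k
  have h2 : (4:ℕ)^12 ≤ 4^(2*k+12) := Nat.pow_le_pow_right (by norm_num) (by omega)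
  have h3 : (22:ℕ) ≤ 4^12 := by norm_num
  have h4 := mseq_pos t k
  calc (22:ℕ) = 22 * 1 := by norm_num
    _ ≤ cs t k * mseq t k := Nat.mul_le_mul (by omega) (by omega)

lemma Pseq_le (k : ℕ) : Pseq t k ≤ (mseq t k)^(6*k+12) := by
  induction k with
  | zero => rw [mseq_zero]; norm_num [Pseq]
  | succ k ih =>
    have h22 := m_ge_22 t k
    have hmono : mseq t k ≤ mseq t (k+1) := mseq_mono t (Nat.le_succ k)
    have h1 : 1 ≤ mseq t (k+1) := by omega
    calc Pseq t (k+1) = 22*(mseq t (k+1))^3 * Pseq t k := rfl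
      _ ≤ 22*(mseq t (k+1))^3 * (mseq t k)^(6*k+12) := Nat.mul_le_mul_left _ ih
      _ ≤ (mseq t (k+1))*(mseq t (k+1))^3 * (mseq t (k+1))^(6*k+12) :=
          Nat.mul_le_mul (Nat.mul_le_mul_right _ (by omega))
            (Nat.pow_le_pow_left hmono _)
      _ = (mseq t (k+1))^(1+3+(6*k+12)) := by
          conv_rhs => rw [pow_add, pow_add, pow_one]
      _ ≤ (mseq t (k+1))^(6*(k+1)+12) := Nat.pow_le_pow_right h1 (by omega)

/-- the growth condition -/
lemma growth (k : ℕ) : 22*(13*2^(k+1) * Pseq t k)^4 ≤ mseq t (k+1) := by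
  have hPk := Pseq_le t k
  have hm1 : 1 ≤ mseq t k := mseq_pos t k
  calc 22*(13*2^(k+1) * Pseq t k)^4
      = 22*(13^4 * (2^(k+1))^4 * (Pseq t k)^4) := by rw [mul_pow, mul_pow]
    _ ≤ 22*(13^4 * (2^(k+1))^4 * ((mseq t k)^(6*k+12))^4) := by
        apply Nat.mul_le_mul_left
        apply Nat.mul_le_mul_left
        exact Nat.pow_le_pow_left hPk 4
    _ = (22*13^4) * (2^(4*(k+1)) * (mseq t k)^((6*k+12)*4)) := by
        rw [← pow_mul, ← pow_mul]; ring
    _ ≤ 2^20 * (2^(4*(k+1)) * (mseq t k)^((6*k+12)*4)) := by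
        apply Nat.mul_le_mul_right
        norm_num
    _ = 2^(20+4*(k+1)) * (mseq t k)^((6*k+12)*4) := by rw [pow_add]; ring
    _ = 4^(2*k+12) * (mseq t k)^((6*k+12)*4) := by
        have e4 : (4:ℕ)^(2*k+12) = 2^(20+4*(k+1)) := by
          rw [show (4:ℕ) = 2^2 by norm_num, ← pow_mul]
          congr 1
          omega
        rw [e4]
    _ ≤ 4^(2*k+12) * ((mseq t k)^(24*k+50) * mseq t k) := by
        apply Nat.mul_le_mul_left
        rw [← pow_succ]
        exact Nat.pow_le_pow_right hm1 (by omega)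
    _ = (4^(2*k+12) * (mseq t k)^(24*k+50)) * mseq t k := by ring
    _ ≤ cs t k * mseq t k := by
        apply Nat.mul_le_mul_right
        unfold cs
        omega
    _ = mseq t (k+1) := (mseq_succ t k).symm

/-- the increment bound -/
lemma inc_le (k : ℕ) :
    (Pseq t k : ℝ)/(mseq t (k+1))
      * (4*Real.sqrt (Real.sqrt ((22*(mseq t (k+1))^3 : ℕ))) + 1) ≤ (1/2:ℝ)^(k+1) := by
  set P : ℝ := (Pseq t k : ℝ) with hP
  set q : ℝ := ((mseq t (k+1) : ℕ) : ℝ) with hq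
  set c : ℝ := 13*2^(k+1)*P with hc
  have hP1 : (1:ℝ) ≤ P := by
    rw [hP]; exact_mod_cast Pseq_pos t k
  have hq0 : (0:ℝ) < q := by
    rw [hq]; exact_mod_cast mseq_pos t (k+1)
  have hc1 : (1:ℝ) ≤ c := by
    rw [hc]
    have h2 : (1:ℝ) ≤ 2^(k+1) := by
      calc (1:ℝ) = 1^(k+1) := (one_pow _).symm
        _ ≤ 2^(k+1) := pow_le_pow_left₀ (by norm_num) (by norm_num) _
    nlinarith [hP1, h2]
  have hc0 : (0:ℝ) < c := lt_of_lt_of_le one_pos hc1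
  have hgrow : 22*c^4 ≤ q := by
    have hn := growth t k
    have hcast : ((22*(13*2^(k+1) * Pseq t k)^4 : ℕ):ℝ) ≤ ((mseq t (k+1) : ℕ) : ℝ) := by
      exact_mod_cast hn
    calc 22*c^4 = ((22*(13*2^(k+1) * Pseq t k)^4 : ℕ):ℝ) := by
          rw [hc, hP]; push_cast; ring
      _ ≤ q := hcast
  have hcq : c ≤ q := by
    have h3 : (1:ℝ) ≤ c^3 := by
      calc (1:ℝ) = 1^3 := (one_pow _).symm
        _ ≤ c^3 := pow_le_pow_left₀ (by norm_num) hc1 _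
    have h4 : c*1 ≤ c*c^3 := mul_le_mul_of_nonneg_left h3 (le_of_lt hc0)
    nlinarith [h4, pow_pos hc0 4]
  have hX : ((22*(mseq t (k+1))^3 : ℕ):ℝ) ≤ (q/c)^4 := by
    have h1 : ((22*(mseq t (k+1))^3 : ℕ):ℝ) = 22*q^3 := by rw [hq]; push_cast; ring
    rw [h1, div_pow, le_div_iff₀ (by positivity)]
    have h2 : (22*c^4) * q^3 ≤ q * q^3 :=
      mul_le_mul_of_nonneg_right hgrow (by positivity)
    nlinarith [h2]
  have hsq : Real.sqrt (Real.sqrt ((22*(mseq t (k+1))^3 : ℕ))) ≤ q/c := by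
    rw [Real.sqrt_le_iff]
    refine ⟨by positivity, ?_⟩
    rw [Real.sqrt_le_iff]
    refine ⟨by positivity, ?_⟩
    calc ((22*(mseq t (k+1))^3 : ℕ):ℝ) ≤ (q/c)^4 := hX
      _ = ((q/c)^2)^2 := by ring
  have hy1 : (1:ℝ) ≤ q/c := (one_le_div hc0).mpr hcq
  have hP0 : (0:ℝ) < P := lt_of_lt_of_le one_pos hP1
  calc P/q * (4*Real.sqrt (Real.sqrt ((22*(mseq t (k+1))^3 : ℕ))) + 1)
      ≤ P/q * (5*(q/c)) := by
        apply mul_le_mul_of_nonneg_left _ (by positivity)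
        linarith [hsq, hy1]
    _ = 5*(P/c) := by
        field_simp
    _ = 5/(13*2^(k+1)) := by
        have hPne : P ≠ 0 := ne_of_gt hP0
        rw [hc]
        field_simp
    _ ≤ (1/2:ℝ)^(k+1) := by
        have he : (1/2:ℝ)^(k+1) = 1/2^(k+1) := by
          rw [div_pow, one_pow]
        rw [he, div_le_div_iff₀ (by positivity) (by positivity)]
        nlinarith [pow_pos (show (0:ℝ) < 2 by norm_num) (k+1)]

end Stmt2C

namespace Stmt2C

variable (t : ℕ → Bool)

/-- visits to any level in window `[0, q_{k+1})` are at most `Pseq k` -/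
lemma cnt : ∀ k x ℓ,
    ((Finset.range (mseq t (k+1))).filter
      (fun n => birkhoffS (alphaF t) x n = ℓ)).card ≤ Pseq t k := by
  intro k
  induction k with
  | zero =>
    intro x ℓ
    have h := count_step (α := alphaF t) (q := mseq t 0) (Q := mseq t 1)
      (p := pint t 0) (ε := epsk t 0) (P' := 3) (x := x) (ℓ := ℓ)
      (by rw [mseq_zero]) (mseq_odd t 0) (mseq_mono t (by omega))
      (epsk_key t 0) (epsk_pos t 0) (epsk_bound t 0)
      (fun y ℓ' => by
        calc ((Finset.range (mseq t 0)).filter (fun n => birkhoffS (alphaF t) y n = ℓ')).card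
            ≤ (Finset.range (mseq t 0)).card := Finset.card_filter_le _ _
          _ = 3 := by rw [Finset.card_range, mseq_zero])
    calc ((Finset.range (mseq t 1)).filter (fun n => birkhoffS (alphaF t) x n = ℓ)).card
        ≤ 22*(mseq t 0)^3*3 := h
      _ = Pseq t 0 := by rw [mseq_zero]; rfl
  | succ k ih =>
    intro x ℓ
    have h := count_step (α := alphaF t) (q := mseq t (k+1)) (Q := mseq t (k+2))
      (p := pint t (k+1)) (ε := epsk t (k+1)) (P' := Pseq t k) (x := x) (ℓ := ℓ)
      (mseq_three_le t (k+1)) (mseq_odd t (k+1)) (mseq_mono t (by omega))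
      (epsk_key t (k+1)) (epsk_pos t (k+1)) (epsk_bound t (k+1))
      (fun y ℓ' => ih y ℓ')
    exact h

/-- weighted visits to any level in window `[1, q_{k+1})` -/
lemma ws : ∀ k x ℓ,
    (∑ n ∈ Finset.Ico 1 (mseq t (k+1)),
      if birkhoffS (alphaF t) x n = ℓ then (1/(n:ℝ)) else 0) ≤ 24 - (1/2:ℝ)^k := by
  intro k
  induction k with
  | zero =>
    intro x ℓ
    have hbase : ∀ (y : ℝ) (ℓ' : ℤ),
        (∑ n ∈ Finset.Ico 1 (mseq t 0),
          if birkhoffS (alphaF t) y n = ℓ' then (1/(n:ℝ)) else 0) ≤ 2 := by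
      intro y ℓ'
      rw [mseq_zero]
      calc (∑ n ∈ Finset.Ico 1 3, if birkhoffS (alphaF t) y n = ℓ' then (1/(n:ℝ)) else 0)
          ≤ ∑ n ∈ Finset.Ico 1 3, (1:ℝ) := by
            apply Finset.sum_le_sum
            intro n hn
            simp only [Finset.mem_Ico] at hn
            split
            · apply div_le_one_of_le₀
              · exact_mod_cast hn.1
              · positivity
            · norm_num
        _ = 2 := by norm_num
    have h := weighted_step (α := alphaF t) (q := mseq t 0) (Q := mseq t 1)
      (p := pint t 0) (ε := epsk t 0) (P' := 3) (x := x) (ℓ := ℓ)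
      (by rw [mseq_zero]) (mseq_odd t 0) (mseq_mono t (by omega))
      (epsk_key t 0) (epsk_pos t 0) (epsk_bound t 0)
      (fun y ℓ' => by
        calc ((Finset.range (mseq t 0)).filter (fun n => birkhoffS (alphaF t) y n = ℓ')).card
            ≤ (Finset.range (mseq t 0)).card := Finset.card_filter_le _ _
          _ = 3 := by rw [Finset.card_range, mseq_zero])
      (Φ' := 2) hbase
    have hnum : (3:ℝ)/(mseq t 0)
        * (4*Real.sqrt (Real.sqrt ((22*(mseq t 0)^3 : ℕ))) + 1) ≤ 21 := by
      rw [mseq_zero]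
      have h594 : ((22*3^3 : ℕ):ℝ) = 594 := by norm_num
      have hs1 : Real.sqrt 594 ≤ 25 := by
        rw [Real.sqrt_le_iff]
        norm_num
      have hs2 : Real.sqrt (Real.sqrt 594) ≤ 5 := by
        rw [Real.sqrt_le_iff]
        constructor
        · norm_num
        · calc Real.sqrt 594 ≤ 25 := hs1
            _ = 5^2 := by norm_num
      rw [h594]
      have : (3:ℝ)/((3:ℕ):ℝ) = 1 := by norm_num
      rw [this, one_mul]
      linarith
    calc (∑ n ∈ Finset.Ico 1 (mseq t 1),
          if birkhoffS (alphaF t) x n = ℓ then (1/(n:ℝ)) else 0)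
        ≤ 2 + (3:ℝ)/(mseq t 0)
            * (4*Real.sqrt (Real.sqrt ((22*(mseq t 0)^3 : ℕ))) + 1) := h
      _ ≤ 2 + 21 := by linarith
      _ = 24 - (1/2:ℝ)^0 := by norm_num
  | succ k ih =>
    intro x ℓ
    have h := weighted_step (α := alphaF t) (q := mseq t (k+1)) (Q := mseq t (k+2))
      (p := pint t (k+1)) (ε := epsk t (k+1)) (P' := Pseq t k) (x := x) (ℓ := ℓ)
      (mseq_three_le t (k+1)) (mseq_odd t (k+1)) (mseq_mono t (by omega))
      (epsk_key t (k+1)) (epsk_pos t (k+1)) (epsk_bound t (k+1))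
      (fun y ℓ' => cnt t k y ℓ')
      (Φ' := 24 - (1/2:ℝ)^k) (fun y ℓ' => ih y ℓ')
    have hinc := inc_le t k
    calc (∑ n ∈ Finset.Ico 1 (mseq t (k+2)),
          if birkhoffS (alphaF t) x n = ℓ then (1/(n:ℝ)) else 0)
        ≤ (24 - (1/2:ℝ)^k) + (Pseq t k : ℝ)/(mseq t (k+1))
            * (4*Real.sqrt (Real.sqrt ((22*(mseq t (k+1))^3 : ℕ))) + 1) := h
      _ ≤ (24 - (1/2:ℝ)^k) + (1/2:ℝ)^(k+1) := by linarith
      _ = 24 - (1/2:ℝ)^(k+1) := by ring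

/-- the final uniform bound -/
lemma ws24 (k : ℕ) (x : ℝ) :
    (∑ n ∈ Finset.Ico 1 (mseq t (k+1)),
      if birkhoffS (alphaF t) x n = 0 then (1/(n:ℝ)) else 0) ≤ 24 := by
  have h := ws t k x 0
  have : (0:ℝ) ≤ (1/2:ℝ)^k := by positivity
  linarith

end Stmt2C

namespace Stmt2C

variable (t : ℕ → Bool)

lemma alpha_pos : 0 < alphaF t := by
  have h := alpha_head_tail t 0
  have h2 := Tail_pos t 0
  have h3 : (∑ j ∈ Finset.range 1, (1/(mseq t j) : ℝ)) = 1/3 := by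
    rw [Finset.sum_range_one, mseq_zero]
    norm_num
  rw [h, h3]
  linarith

lemma alpha_lt_one : alphaF t < 1 := by
  have h := alpha_head_tail t 0
  have h2 := Tail_le t 0
  have h3 : (∑ j ∈ Finset.range 1, (1/(mseq t j) : ℝ)) = 1/3 := by
    rw [Finset.sum_range_one, mseq_zero]
    norm_num
  have h15 : (15:ℝ) ≤ mseq t 1 := by
    have := mseq_growth t 0
    rw [mseq_zero] at this
    exact_mod_cast this
  have h4 : (2:ℝ)/(mseq t 1) ≤ 2/15 := by
    apply div_le_div_of_nonneg_left (by norm_num) (by norm_num) h15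
  rw [h, h3]
  linarith

lemma cs_unbounded (k : ℕ) : k < cs t k := by
  have h1 := cs_big t k
  have h2 : k < 2^k := Nat.lt_two_pow_self
  have h3 : (2:ℕ)^k ≤ 4^(2*k+12) := by
    calc (2:ℕ)^k ≤ 2^(2*(2*k+12)) := Nat.pow_le_pow_right (by norm_num) (by omega)
      _ = 4^(2*k+12) := by rw [show (4:ℕ) = 2^2 by norm_num, ← pow_mul]
  omega

lemma alpha_irrational : Irrational (alphaF t) := by
  rintro ⟨r, hr⟩
  set k := 2*r.den + 2 with hk
  have hden : 0 < r.den := r.den_pos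
  have hdenR : (0:ℝ) < (r.den:ℝ) := by exact_mod_cast hden
  have hnum : (r.num:ℝ) = (r.den:ℝ) * alphaF t := by
    rw [← hr, Rat.cast_def]
    have hdne : ((r.den:ℕ):ℝ) ≠ 0 := ne_of_gt hdenR
    field_simp
  -- the integer z = q_k * num - den * p_k equals den * eps_k
  set z : ℤ := (mseq t k : ℤ) * r.num - (r.den : ℤ) * pint t k with hz
  have hzval : (z:ℝ) = (r.den:ℝ) * epsk t k := by
    have hkey := epsk_key t k
    rw [hz]
    push_cast
    rw [hnum]
    linear_combination (r.den:ℝ) * hkey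
  have hz0 : (0:ℝ) < (z:ℝ) := by
    rw [hzval]
    exact mul_pos hdenR (epsk_pos t k)
  -- eps_k ≤ 2 / cs t k
  have hcs : (0:ℝ) < (cs t k : ℝ) := by
    have := cs_five_le t k
    exact_mod_cast (by omega : 0 < cs t k)
  have hmpos : (0:ℝ) < (mseq t k : ℝ) := by exact_mod_cast mseq_pos t k
  have heps : epsk t k ≤ 2/(cs t k) := by
    have hb := epsk_bound t k
    rw [mseq_succ] at hb
    rw [le_div_iff₀ hcs]
    push_cast at hb
    nlinarith [hb, hmpos]
  have hz1 : (z:ℝ) < 1 := by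
    rw [hzval]
    have hlt : 2*r.den < cs t k := by
      have h5 := cs_unbounded t k
      omega
    have hcs2 : 2*(r.den:ℝ) < (cs t k : ℝ) := by exact_mod_cast hlt
    calc (r.den:ℝ) * epsk t k ≤ (r.den:ℝ) * (2/(cs t k)) :=
          mul_le_mul_of_nonneg_left heps (le_of_lt hdenR)
      _ < 1 := by
          rw [mul_div_assoc']
          rw [div_lt_one hcs]
          linarith
  have : (0:ℤ) < z ∧ z < 1 := ⟨by exact_mod_cast hz0, by exact_mod_cast hz1⟩
  omega

lemma cs_ge_m (k : ℕ) : mseq t k ≤ cs t k := by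
  have h1 : mseq t k ≤ (mseq t k)^(24*k+50) := by
    calc mseq t k = (mseq t k)^1 := (pow_one _).symm
      _ ≤ (mseq t k)^(24*k+50) := Nat.pow_le_pow_right (mseq_pos t k) (by omega)
  have h2 : 1 ≤ 4^(2*k+12) := Nat.one_le_pow _ _ (by norm_num)
  unfold cs
  calc mseq t k ≤ (mseq t k)^(24*k+50) := h1
    _ = 1 * (mseq t k)^(24*k+50) := (one_mul _).symm
    _ ≤ 4^(2*k+12) * (mseq t k)^(24*k+50) := Nat.mul_le_mul_right _ h2
    _ ≤ _ := by omega

lemma Tail_peel (k : ℕ) : Tail t k = 1/(mseq t (k+1)) + Tail t (k+1) := by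
  rw [Tail, Summable.tsum_eq_zero_add (summable_tail t (k+1))]
  congr 1
  · norm_num
  · rw [Tail]
    apply tsum_congr
    intro i
    have e : i + 1 + (k+1) = i + (k+1+1) := by omega
    rw [e]

lemma alpha_inj : Function.Injective (fun s : ℕ → Bool => alphaF s) := by
  intro t1 t2 h
  simp only at h
  by_contra hne
  have hex : ∃ k, t1 k ≠ t2 k := by
    by_contra h'
    push_neg at h'
    exact hne (funext h')
  set k := Nat.find hex with hkdef
  have hk : t1 k ≠ t2 k := Nat.find_spec hex
  have hmin : ∀ j, j < k → t1 j = t2 j := by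
    intro j hj
    by_contra h'
    exact Nat.find_min hex hj h'
  have hmeq : ∀ j, j ≤ k → mseq t1 j = mseq t2 j := by
    intro j
    induction j with
    | zero => intro _; rw [mseq_zero, mseq_zero]
    | succ j ih =>
      intro hj
      rw [mseq_succ, mseq_succ, cs, cs, ih (by omega), hmin j (by omega)]
  -- tails must agree
  have hheads : (∑ j ∈ Finset.range (k+1), (1/(mseq t1 j) : ℝ))
      = (∑ j ∈ Finset.range (k+1), (1/(mseq t2 j) : ℝ)) := by
    apply Finset.sum_congr rfl
    intro j hj
    simp only [Finset.mem_range] at hj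
    rw [hmeq j (by omega)]
  have htails : Tail t1 k = Tail t2 k := by
    have h1 := alpha_head_tail t1 k
    have h2 := alpha_head_tail t2 k
    rw [h] at h1
    rw [h2] at h1
    rw [hheads] at h1
    linarith
  -- core contradiction, stated for the ordered case
  have main : ∀ s1 s2 : ℕ → Bool, (∀ j, j ≤ k → mseq s1 j = mseq s2 j) →
      s1 k = false → s2 k = true → Tail s1 k ≠ Tail s2 k := by
    intro s1 s2 hm hs1 hs2
    set m : ℕ := mseq s1 k with hm0
    set A : ℕ := mseq s1 (k+1) with hA0
    set B : ℕ := mseq s2 (k+1) with hB0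
    have hm3 : 3 ≤ m := mseq_three_le s1 k
    have hA15 : 15 ≤ A := by
      rw [hA0]
      have := mseq_growth s1 k
      rw [← hm0] at this
      omega
    have hmk : mseq s1 k = mseq s2 k := hm k le_rfl
    have hBA : B = A + 2*m := by
      rw [hA0, hB0, mseq_succ, mseq_succ, cs, cs, hs1, hs2, ← hmk, ← hm0]
      simp only [Bool.cond_false, Bool.cond_true]
      ring
    -- real versions
    set a : ℝ := (A:ℝ) with ha0
    set b : ℝ := (B:ℝ) with hb0
    set mm : ℝ := (m:ℝ) with hmm0
    have haR : (15:ℝ) ≤ a := by rw [ha0]; exact_mod_cast hA15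
    have hmR : (3:ℝ) ≤ mm := by rw [hmm0]; exact_mod_cast hm3
    have hbR : b = a + 2*mm := by rw [hb0, ha0, hmm0, hBA]; push_cast; ring
    have ha0' : (0:ℝ) < a := by linarith
    have hb0' : (0:ℝ) < b := by linarith
    -- lower bound for Tail s1 k
    have hT1 : 1/a < Tail s1 k := by
      rw [Tail_peel s1 k, ← hA0, ← ha0]
      have := Tail_pos s1 (k+1)
      linarith
    -- upper bound for Tail s2 k
    have hT2 : Tail s2 k ≤ 1/b + 2/b^2 := by
      rw [Tail_peel s2 k, ← hB0, ← hb0]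
      have h1 := Tail_le s2 (k+1)
      have h2 : (b:ℝ)^2 ≤ (mseq s2 (k+2) : ℝ) := by
        have h3 : B * B ≤ mseq s2 (k+2) := by
          rw [mseq_succ]
          apply Nat.mul_le_mul_right
          exact cs_ge_m s2 (k+1)
        rw [hb0]
        calc ((B:ℝ))^2 = ((B*B : ℕ):ℝ) := by push_cast; ring
          _ ≤ mseq s2 (k+2) := by exact_mod_cast h3
      have h4 : (2:ℝ)/(mseq s2 (k+2)) ≤ 2/b^2 := by
        apply div_le_div_of_nonneg_left (by norm_num) (by positivity) h2
      linarith
    -- the two bounds are incompatible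
    have hnum : 0 < b^2 - a*b - 2*a := by nlinarith [hbR, haR, hmR]
    have hkey : 1/b + 2/b^2 < 1/a := by
      have he : 1/a - (1/b + 2/b^2) = (b^2 - a*b - 2*a)/(a*b^2) := by
        field_simp
        ring
      have hpos : 0 < (b^2 - a*b - 2*a)/(a*b^2) := by positivity
      linarith [he ▸ hpos]
    intro hcontra
    rw [hcontra] at hT1
    linarith
  rcases hb1 : t1 k with _ | _ <;> rcases hb2 : t2 k with _ | _
  · exact hk (by rw [hb1, hb2])
  · exact main t1 t2 hmeq hb1 hb2 htails
  · exact main t2 t1 (fun j hj => (hmeq j hj).symm) hb2 hb1 htails.symm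
  · exact hk (by rw [hb1, hb2])

lemma not_countable_fun : ¬ Countable (ℕ → Bool) := by
  rw [← Cardinal.mk_le_aleph0_iff, not_le]
  calc Cardinal.aleph0 < 2 ^ Cardinal.aleph0 := Cardinal.cantor _
    _ = Cardinal.mk (ℕ → Bool) := by
        rw [Cardinal.mk_arrow, Cardinal.mk_bool, Cardinal.mk_nat, Cardinal.lift_id,
          Cardinal.lift_id]

end Stmt2C


/-- There is an uncountable set of irrationals α ∈ (0,1) such that the sums
    ∑_{n ∈ V_{α,x}} 1/n are uniformly bounded over x ∈ [0,1). -/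
theorem stmt2 :
    ∃ A : Set ℝ, A ⊆ Set.Ioo (0 : ℝ) 1 ∧ (∀ α ∈ A, Irrational α) ∧ ¬ A.Countable ∧
      ∀ α ∈ A, ∃ K : ℝ≥0∞, K < ⊤ ∧ ∀ x ∈ Set.Ico (0 : ℝ) 1,
        ∑' n : balancedTimes α x, (1 / ((n : ℕ) : ℝ≥0∞)) ≤ K := by
  classical
  refine ⟨Set.range (fun t : ℕ → Bool => Stmt2C.alphaF t), ?_, ?_, ?_, ?_⟩
  · rintro x ⟨t, rfl⟩
    exact ⟨Stmt2C.alpha_pos t, Stmt2C.alpha_lt_one t⟩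
  · rintro x ⟨t, rfl⟩
    exact Stmt2C.alpha_irrational t
  · intro hc
    have h1 : Countable ↥(Set.range (fun t : ℕ → Bool => Stmt2C.alphaF t)) :=
      Set.countable_coe_iff.mpr hc
    exact Stmt2C.not_countable_fun
      (Countable.of_equiv _ (Equiv.ofInjective _ Stmt2C.alpha_inj).symm)
  · rintro α ⟨t, rfl⟩
    refine ⟨24, ?_, ?_⟩
    · exact ENNReal.ofNat_lt_top
    intro x _
    rw [ENNReal.tsum_eq_iSup_sum]
    apply iSup_le
    intro s
    set F := s.image Subtype.val with hF
    have himg : ∑ m ∈ F, (1/((m:ℕ):ℝ≥0∞)) = ∑ n ∈ s, (1 / ((n:ℕ) : ℝ≥0∞)) := by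
      rw [hF]
      apply Finset.sum_image
      intro a _ b _ hab
      exact Subtype.ext hab
    have hmem : ∀ m ∈ F, 1 ≤ m ∧ birkhoffS (Stmt2C.alphaF t) x m = 0 := by
      intro m hm
      rw [hF] at hm
      obtain ⟨n, _, rfl⟩ := Finset.mem_image.mp hm
      exact n.2
    set N := F.sup id with hN
    have hwin : ∀ m ∈ F, m ∈ Finset.Ico 1 (Stmt2C.mseq t (N+1+1)) := by
      intro m hm
      rw [Finset.mem_Ico]
      refine ⟨(hmem m hm).1, ?_⟩
      have h1 : m ≤ N := by rw [hN]; exact Finset.le_sup (f := id) hm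
      have h2 : N < 2^N := Nat.lt_two_pow_self
      have h3 : (2:ℕ)^N ≤ 5^N := Nat.pow_le_pow_left (by norm_num) N
      have h4 : (5:ℕ)^N ≤ 5^(N+1+1) := Nat.pow_le_pow_right (by norm_num) (by omega)
      have h5 := Stmt2C.mseq_ge_pow t (N+1+1)
      omega
    have hreal : ∑ m ∈ F, (1/(m:ℝ)) ≤ 24 := by
      have he : ∑ m ∈ F, (1/(m:ℝ))
          = ∑ m ∈ F, (if birkhoffS (Stmt2C.alphaF t) x m = 0 then (1/(m:ℝ)) else 0) :=
        Finset.sum_congr rfl (fun m hm => by rw [if_pos (hmem m hm).2])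
      rw [he]
      calc ∑ m ∈ F, (if birkhoffS (Stmt2C.alphaF t) x m = 0 then (1/(m:ℝ)) else 0)
          ≤ ∑ m ∈ Finset.Ico 1 (Stmt2C.mseq t (N+1+1)),
              (if birkhoffS (Stmt2C.alphaF t) x m = 0 then (1/(m:ℝ)) else 0) := by
            apply Finset.sum_le_sum_of_subset_of_nonneg hwin
            intro m _ _
            split
            · positivity
            · exact le_refl 0
        _ ≤ 24 := Stmt2C.ws24 t (N+1) x
    calc ∑ n ∈ s, (1 / ((n:ℕ):ℝ≥0∞)) = ∑ m ∈ F, (1/((m:ℕ):ℝ≥0∞)) := himg.symm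
      _ = ∑ m ∈ F, ENNReal.ofReal (1/(m:ℝ)) := by
          apply Finset.sum_congr rfl
          intro m hm
          have hm1 := (hmem m hm).1
          have hpos : (0:ℝ) < (m:ℝ) := by exact_mod_cast (by omega : 0 < m)
          rw [one_div, one_div, ← ENNReal.ofReal_natCast m,
            ← ENNReal.ofReal_inv_of_pos hpos]
      _ = ENNReal.ofReal (∑ m ∈ F, (1/(m:ℝ))) :=
          (ENNReal.ofReal_sum_of_nonneg (fun m _ => by positivity)).symm
      _ ≤ ENNReal.ofReal 24 := ENNReal.ofReal_le_ofReal hreal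
      _ = 24 := by
          rw [show (24:ℝ) = ((24:ℕ):ℝ) by norm_num, ENNReal.ofReal_natCast]
          norm_num
end

section
/- Let (b_n)_{n≥1} be a strictly decreasing sequence of positive reals with Σ_{n=1}^∞ b_n = ∞. Then the following are equivalent: (i) for every set S ⊆ ℕ of positive upper density, Σ_{n ∈ S} b_n = ∞; (ii) liminf_{n→∞} n·b_n > 0. -/
open MeasureTheory Filter
open scoped ENNReal

private lemma myAnti {b : ℕ → ℝ} (hdec : ∀ n, 1 ≤ n → b (n + 1) < b n) :
    ∀ m n : ℕ, 1 ≤ m → m ≤ n → b n ≤ b m := by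
  intro m n hm hmn
  induction n, hmn using Nat.le_induction with
  | base => exact le_rfl
  | succ n hn ih => exact le_trans (hdec n (hm.trans hn)).le ih

private lemma sum_split (f : ℕ → ℝ) {M N : ℕ} (h : M ≤ N) :
    ∑ n ∈ Finset.Icc 1 N, f n
      = ∑ n ∈ Finset.Icc 1 M, f n + ∑ n ∈ Finset.Ioc M N, f n := by
  rw [show Finset.Icc 1 N = Finset.Ioc 0 N from (Finset.Icc_add_one_left_eq_Ioc 0 N).symm,
    show Finset.Icc 1 M = Finset.Ioc 0 M from (Finset.Icc_add_one_left_eq_Ioc 0 M).symm]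
  exact (Finset.sum_Ioc_consecutive f (Nat.zero_le M) h).symm

/-- For a strictly decreasing positive sequence (b_n)_{n≥1} with divergent
    sum, the sum ∑_{n ∈ S} b_n diverges for every S of positive upper density iff
    liminf n·b_n > 0. -/
theorem stmt3 (b : ℕ → ℝ) (hpos : ∀ n, 1 ≤ n → 0 < b n)
    (hdec : ∀ n, 1 ≤ n → b (n + 1) < b n)
    (hdiv : Tendsto (fun N => ∑ n ∈ Finset.Icc 1 N, b n) atTop atTop) :
    (∀ S : Set ℕ, 0 < upperDensity S →
        Tendsto (fun N => ∑ n ∈ Finset.Icc 1 N, Set.indicator S b n) atTop atTop)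
      ↔ 0 < Filter.liminf (fun n : ℕ => ENNReal.ofReal ((n : ℝ) * b n)) atTop := by
  classical
  constructor
  · -- (i) → liminf > 0, by contradiction
    intro hall
    by_contra hl
    have hl0 : Filter.liminf (fun n : ℕ => ENNReal.ofReal ((n : ℝ) * b n)) atTop = 0 := by
      simpa [pos_iff_ne_zero, not_not] using hl
    have key : ∀ k L : ℕ, ∃ n : ℕ, L ≤ n ∧ (n : ℝ) * b n < (1 / 2 : ℝ) ^ k := by
      intro k L
      have hfreq : ∃ᶠ n : ℕ in atTop,
          ENNReal.ofReal ((n : ℝ) * b n) < ENNReal.ofReal ((1 / 2 : ℝ) ^ k) :=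
        Filter.frequently_lt_of_liminf_lt (by isBoundedDefault)
          (by rw [hl0]; exact ENNReal.ofReal_pos.mpr (by positivity))
      obtain ⟨n, hn, hlt⟩ := (Filter.frequently_atTop.mp hfreq) L
      exact ⟨n, hn, (ENNReal.ofReal_lt_ofReal_iff (by positivity)).mp hlt⟩
    choose f hf1 hf2 using key
    set m : ℕ → ℕ := fun k => Nat.rec (f 0 1) (fun k ih => f (k + 1) (2 * ih + 1)) k with hm
    have hm0 : m 0 = f 0 1 := rfl
    have hmsucc : ∀ k, m (k + 1) = f (k + 1) (2 * m k + 1) := fun k => rfl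
    have hm1 : ∀ k, 1 ≤ m k := by
      intro k
      cases k with
      | zero => simpa [hm0] using hf1 0 1
      | succ k => have := hf1 (k + 1) (2 * m k + 1); rw [hmsucc]; omega
    have hmgrow : ∀ k, 2 * m k + 1 ≤ m (k + 1) := fun k => by
      rw [hmsucc]; exact hf1 _ _
    have hmb : ∀ k, (m k : ℝ) * b (m k) < (1 / 2 : ℝ) ^ k := by
      intro k
      cases k with
      | zero => simpa [hm0] using hf2 0 1
      | succ k => rw [hmsucc]; exact hf2 _ _
    have hmk : ∀ k, k + 1 ≤ m k := by
      intro k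
      induction k with
      | zero => exact hm1 0
      | succ k ih => have := hmgrow k; omega
    set S : Set ℕ := ⋃ k, Set.Ioc (m k) (2 * m k) with hS
    have hindnn : ∀ (i : ℕ), ∀ x : ℕ, 0 ≤ (Set.Ioc (m i) (2 * m i)).indicator b x := by
      intro i x
      apply Set.indicator_nonneg
      intro a ha
      exact (hpos a (le_trans (hm1 i) ha.1.le)).le
    -- positive upper density
    have hdens : 0 < upperDensity S := by
      have hhalf : (1 / 2 : ℝ) ≤ upperDensity S := by
        apply Filter.le_limsup_of_frequently_le
        · rw [Filter.frequently_atTop]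
          intro j
          refine ⟨2 * m j, by have := hmk j; omega, ?_⟩
          have hNpos : (0 : ℝ) < ((2 * m j : ℕ) : ℝ) := by
            have := hm1 j; positivity
          rw [le_div_iff₀ hNpos]
          have hcnt : ((m j : ℝ))
              ≤ ∑ n ∈ Finset.Icc 1 (2 * m j), S.indicator (fun _ => (1 : ℝ)) n := by
            have hsub : Finset.Ioc (m j) (2 * m j) ⊆ Finset.Icc 1 (2 * m j) := by
              intro n hn
              rw [Finset.mem_Ioc] at hn
              rw [Finset.mem_Icc]
              have := hm1 j; omega
            calc (m j : ℝ)
                = ∑ n ∈ Finset.Ioc (m j) (2 * m j), (1 : ℝ) := by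
                  rw [Finset.sum_const, Nat.card_Ioc, nsmul_eq_mul, mul_one]
                  congr 1; omega
              _ = ∑ n ∈ Finset.Ioc (m j) (2 * m j), S.indicator (fun _ => (1 : ℝ)) n := by
                  apply Finset.sum_congr rfl
                  intro n hn
                  rw [Finset.mem_Ioc] at hn
                  have hnS : n ∈ S := by
                    rw [hS]; exact Set.mem_iUnion.mpr ⟨j, Set.mem_Ioc.mpr hn⟩
                  exact (Set.indicator_of_mem hnS (fun _ => (1:ℝ))).symm
              _ ≤ _ := by
                  apply Finset.sum_le_sum_of_subset_of_nonneg hsub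
                  intro n _ _
                  exact Set.indicator_nonneg (fun _ _ => by norm_num) n
          calc (1 / 2 : ℝ) * ((2 * m j : ℕ) : ℝ) = (m j : ℝ) := by push_cast; ring
            _ ≤ _ := hcnt
        · apply Filter.isBoundedUnder_of
          refine ⟨1, fun N => ?_⟩
          rcases Nat.eq_zero_or_pos N with hN | hN
          · simp [hN]
          · have hNpos : (0 : ℝ) < (N : ℝ) := by exact_mod_cast hN
            rw [div_le_one hNpos]
            calc ∑ n ∈ Finset.Icc 1 N, S.indicator (fun _ => (1 : ℝ)) n
                ≤ ∑ n ∈ Finset.Icc 1 N, (1 : ℝ) := by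
                  apply Finset.sum_le_sum
                  intro n _
                  by_cases h : n ∈ S <;> simp [h]
              _ = (N : ℝ) := by
                  rw [Finset.sum_const, Nat.card_Icc, nsmul_eq_mul, mul_one]
                  norm_num
      linarith
    -- bounded partial sums
    have hbound : ∀ N, (∑ n ∈ Finset.Icc 1 N, S.indicator b n) ≤ 2 := by
      intro N
      calc ∑ n ∈ Finset.Icc 1 N, S.indicator b n
          ≤ ∑ n ∈ Finset.Icc 1 N,
              ∑ k ∈ Finset.range (N + 1), (Set.Ioc (m k) (2 * m k)).indicator b n := by
            apply Finset.sum_le_sum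
            intro n hn
            rw [Finset.mem_Icc] at hn
            by_cases hnS : n ∈ S
            · obtain ⟨k, hk⟩ := Set.mem_iUnion.mp hnS
              have hkN : k ∈ Finset.range (N + 1) := by
                rw [Finset.mem_range]
                have h1 := hmk k
                have h2 := hk.1
                omega
              rw [Set.indicator_of_mem hnS]
              calc b n = (Set.Ioc (m k) (2 * m k)).indicator b n :=
                    (Set.indicator_of_mem hk b).symm
                _ ≤ _ := Finset.single_le_sum (fun i _ => hindnn i n) hkN
            · rw [Set.indicator_of_notMem hnS]
              exact Finset.sum_nonneg fun i _ => hindnn i n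
        _ = ∑ k ∈ Finset.range (N + 1),
              ∑ n ∈ Finset.Icc 1 N, (Set.Ioc (m k) (2 * m k)).indicator b n :=
            Finset.sum_comm
        _ ≤ ∑ k ∈ Finset.range (N + 1), (1 / 2 : ℝ) ^ k := by
            apply Finset.sum_le_sum
            intro k _
            calc ∑ n ∈ Finset.Icc 1 N, (Set.Ioc (m k) (2 * m k)).indicator b n
                ≤ ∑ n ∈ Finset.Icc 1 N,
                    (if n ∈ Finset.Ioc (m k) (2 * m k) then b (m k) else 0) := by
                  apply Finset.sum_le_sum
                  intro n _
                  by_cases hmem : n ∈ Set.Ioc (m k) (2 * m k)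
                  · rw [Set.indicator_of_mem hmem,
                      if_pos (Finset.mem_Ioc.mpr ⟨hmem.1, hmem.2⟩)]
                    exact myAnti hdec (m k) n (hm1 k) hmem.1.le
                  · rw [Set.indicator_of_notMem hmem,
                      if_neg (by simpa [Finset.mem_Ioc, Set.mem_Ioc] using hmem)]
              _ = ∑ n ∈ Finset.Icc 1 N ∩ Finset.Ioc (m k) (2 * m k), b (m k) :=
                  Finset.sum_ite_mem _ _ _
              _ ≤ (m k : ℝ) * b (m k) := by
                  rw [Finset.sum_const, nsmul_eq_mul]
                  apply mul_le_mul_of_nonneg_right _ (hpos (m k) (hm1 k)).le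
                  have hcard : (Finset.Icc 1 N ∩ Finset.Ioc (m k) (2 * m k)).card ≤ m k := by
                    calc (Finset.Icc 1 N ∩ Finset.Ioc (m k) (2 * m k)).card
                        ≤ (Finset.Ioc (m k) (2 * m k)).card :=
                          Finset.card_le_card Finset.inter_subset_right
                      _ = m k := by rw [Nat.card_Ioc]; omega
                  exact_mod_cast hcard
              _ ≤ (1 / 2 : ℝ) ^ k := (hmb k).le
        _ ≤ 2 := sum_geometric_two_le _
    have hT := hall S hdens
    obtain ⟨N, hN⟩ := (hT.eventually (Filter.eventually_ge_atTop (3 : ℝ))).exists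
    linarith [hbound N]
  · -- liminf > 0 → (i)
    intro h S hS
    obtain ⟨c, hc0, hclt⟩ := exists_between h
    have hctop : c ≠ ⊤ := (lt_of_lt_of_le hclt le_top).ne
    set ε := c.toReal with hε
    have hε0 : 0 < ε := ENNReal.toReal_pos hc0.ne' hctop
    have hev : ∀ᶠ n : ℕ in atTop, ε ≤ (n : ℝ) * b n := by
      filter_upwards [Filter.eventually_lt_of_lt_liminf hclt] with n hn
      exact ((ENNReal.lt_ofReal_iff_toReal_lt hctop).mp hn).le
    obtain ⟨n₀, hn₀⟩ := Filter.eventually_atTop.mp hev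
    set t := upperDensity S / 2 with ht
    have ht0 : 0 < t := by rw [ht]; linarith
    have hfreq : ∃ᶠ N : ℕ in atTop,
        t < (∑ n ∈ Finset.Icc 1 N, S.indicator (fun _ => (1 : ℝ)) n) / N := by
      apply Filter.frequently_lt_of_lt_limsup
      · apply Filter.isCoboundedUnder_le_of_le atTop (x := 0)
        intro N
        apply div_nonneg _ (Nat.cast_nonneg N)
        exact Finset.sum_nonneg fun n _ =>
          Set.indicator_nonneg (fun _ _ => by norm_num) n
      · rw [ht]; unfold upperDensity at hS ⊢; linarith
    set A := fun N => ∑ n ∈ Finset.Icc 1 N, S.indicator b n with hA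
    have hindnn : ∀ n : ℕ, 1 ≤ n → 0 ≤ S.indicator b n := by
      intro n hn
      by_cases hmem : n ∈ S
      · rw [Set.indicator_of_mem hmem]; exact (hpos n hn).le
      · rw [Set.indicator_of_notMem hmem]
    have hAmono : Monotone A := by
      intro M N hMN
      apply Finset.sum_le_sum_of_subset_of_nonneg (Finset.Icc_subset_Icc_right hMN)
      intro n hn _
      rw [Finset.mem_Icc] at hn
      exact hindnn n hn.1
    set δ := ε * t / 2 with hδ
    have hδ0 : 0 < δ := by positivity
    have key : ∀ M : ℕ, ∃ N : ℕ, A M + δ ≤ A N := by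
      intro M
      obtain ⟨N, hNge, hNcnt⟩ := (Filter.frequently_atTop.mp hfreq)
        (max (max n₀ 1) (⌈2 * (M : ℝ) / t⌉₊ + M + 1))
      have hN1 : 1 ≤ N := ((le_max_right n₀ 1).trans (le_max_left _ _)).trans hNge
      have hNn₀ : n₀ ≤ N := ((le_max_left n₀ 1).trans (le_max_left _ _)).trans hNge
      have hMN : M ≤ N := by
        have := (le_max_right (max n₀ 1) (⌈2 * (M : ℝ) / t⌉₊ + M + 1)).trans hNge; omega
      have hNpos : (0 : ℝ) < (N : ℝ) := by exact_mod_cast hN1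
      -- M ≤ (t/2) N
      have hMt : (M : ℝ) ≤ t / 2 * N := by
        have h1 : (2 * (M : ℝ) / t) ≤ (⌈2 * (M : ℝ) / t⌉₊ : ℝ) := Nat.le_ceil _
        have h2 : (⌈2 * (M : ℝ) / t⌉₊ : ℕ) ≤ N := by
          have := (le_max_right (max n₀ 1) (⌈2 * (M : ℝ) / t⌉₊ + M + 1)).trans hNge; omega
        have h2' : ((⌈2 * (M : ℝ) / t⌉₊ : ℕ) : ℝ) ≤ (N : ℝ) := by exact_mod_cast h2
        have : 2 * (M : ℝ) / t ≤ (N : ℝ) := le_trans h1 h2'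
        rw [div_le_iff₀ ht0] at this
        linarith
      -- counting bound
      have hcntN : t * N < ∑ n ∈ Finset.Icc 1 N, S.indicator (fun _ => (1 : ℝ)) n := by
        rw [lt_div_iff₀ hNpos] at hNcnt
        exact hNcnt
      have hcntM : ∑ n ∈ Finset.Icc 1 M, S.indicator (fun _ => (1 : ℝ)) n ≤ (M : ℝ) := by
        calc ∑ n ∈ Finset.Icc 1 M, S.indicator (fun _ => (1 : ℝ)) n
            ≤ ∑ n ∈ Finset.Icc 1 M, (1 : ℝ) := by
              apply Finset.sum_le_sum
              intro n _
              by_cases h : n ∈ S <;> simp [h]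
          _ = (M : ℝ) := by
              rw [Finset.sum_const, Nat.card_Icc, nsmul_eq_mul, mul_one]
              norm_num
      have hsplit1 := sum_split (S.indicator (fun _ => (1 : ℝ))) hMN
      have hIoc1 : t / 2 * N ≤ ∑ n ∈ Finset.Ioc M N, S.indicator (fun _ => (1 : ℝ)) n := by
        have : t * N - M ≤ ∑ n ∈ Finset.Ioc M N, S.indicator (fun _ => (1 : ℝ)) n := by
          linarith [hsplit1, hcntN, hcntM]
        linarith
      -- b N lower bound
      have hbN : ε / N ≤ b N := by
        rw [div_le_iff₀ hNpos]
        have := hn₀ N hNn₀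
        linarith
      -- pointwise lower bound on Ioc
      have hpt : ∀ n ∈ Finset.Ioc M N,
          b N * S.indicator (fun _ => (1 : ℝ)) n ≤ S.indicator b n := by
        intro n hn
        rw [Finset.mem_Ioc] at hn
        by_cases hmem : n ∈ S
        · rw [Set.indicator_of_mem hmem, Set.indicator_of_mem hmem, mul_one]
          exact myAnti hdec n N (by omega) hn.2
        · rw [Set.indicator_of_notMem hmem, Set.indicator_of_notMem hmem, mul_zero]
      refine ⟨N, ?_⟩
      have hsplit2 := sum_split (S.indicator b) hMN
      have hstep : δ ≤ ∑ n ∈ Finset.Ioc M N, S.indicator b n := by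
        calc δ = ε / N * (t / 2 * N) := by
              rw [hδ]; field_simp
          _ ≤ b N * (t / 2 * N) := by
              apply mul_le_mul_of_nonneg_right hbN
              positivity
          _ ≤ b N * ∑ n ∈ Finset.Ioc M N, S.indicator (fun _ => (1 : ℝ)) n := by
              exact mul_le_mul_of_nonneg_left hIoc1 (hpos N hN1).le
          _ = ∑ n ∈ Finset.Ioc M N, b N * S.indicator (fun _ => (1 : ℝ)) n :=
              (Finset.mul_sum _ _ _)
          _ ≤ ∑ n ∈ Finset.Ioc M N, S.indicator b n := Finset.sum_le_sum hpt
      have : A N = A M + ∑ n ∈ Finset.Ioc M N, S.indicator b n := hsplit2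
      linarith
    have grow : ∀ j : ℕ, ∃ N, (j : ℝ) * δ ≤ A N := by
      intro j
      induction j with
      | zero => exact ⟨0, by simp [hA]⟩
      | succ j ih =>
          obtain ⟨N, hN⟩ := ih
          obtain ⟨N', hN'⟩ := key N
          refine ⟨N', ?_⟩
          push_cast
          linarith
    apply tendsto_atTop_atTop_of_monotone hAmono
    intro K
    obtain ⟨j, hj⟩ := exists_nat_ge (K / δ)
    obtain ⟨N, hN⟩ := grow j
    refine ⟨N, ?_⟩
    have : K ≤ (j : ℝ) * δ := by
      rw [div_le_iff₀ hδ0] at hj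
      linarith
    linarith
end

section
/- Let (n_t)_{t≥1} be any strictly increasing sequence of natural numbers, and for irrational α ∈ (0,1) define N_α = {m ∈ ℕ : A_{n_m}(α) < 12 · n_m · log(n_m)}. Then the set B = {α ∈ (0,1) : α irrational and d*(N_α) > 0} has positive Lebesgue measure. -/
open MeasureTheory Filter
open scoped ENNReal

section Auxiliary
open Set

/-- The irrationals in (0,1). -/
def II : Set ℝ := {x | x ∈ Set.Ioo (0:ℝ) 1 ∧ Irrational x}

lemma measurable_gaussMap : Measurable gaussMap :=
  measurable_fract.comp measurable_inv

lemma measurableSet_II : MeasurableSet II := by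
  have : II = Set.Ioo (0:ℝ) 1 ∩ {x | Irrational x} := rfl
  rw [this]
  refine measurableSet_Ioo.inter ?_
  have : {x : ℝ | Irrational x} = (Set.range ((↑) : ℚ → ℝ))ᶜ := rfl
  rw [this]
  exact (Set.countable_range _).measurableSet.compl

lemma volume_II : volume II = 1 := by
  have h1 : volume (Set.Ioo (0:ℝ) 1) = 1 := by simp
  have h2 : volume (Set.Ioo (0:ℝ) 1 \ II) = 0 := by
    refine measure_mono_null (fun x hx => ?_) ((Set.countable_range ((↑) : ℚ → ℝ)).measure_zero _)
    rcases hx with ⟨hx1, hx2⟩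
    by_contra h
    exact hx2 ⟨hx1, h⟩
  have : volume (Set.Ioo (0:ℝ) 1) ≤ volume II := by
    calc volume (Set.Ioo (0:ℝ) 1) ≤ volume (II ∪ (Set.Ioo (0:ℝ) 1 \ II)) := by
          refine measure_mono (fun x hx => ?_)
          by_cases h : x ∈ II
          · exact Or.inl h
          · exact Or.inr ⟨hx, h⟩
    _ ≤ volume II + volume (Set.Ioo (0:ℝ) 1 \ II) := measure_union_le _ _
    _ = volume II := by rw [h2, add_zero]
  refine le_antisymm ?_ (h1 ▸ this)
  calc volume II ≤ volume (Set.Ioo (0:ℝ) 1) := measure_mono (fun x hx => hx.1)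
  _ = 1 := h1

lemma gaussMap_mem_II {x : ℝ} (hx : x ∈ II) : gaussMap x ∈ II := by
  obtain ⟨⟨h0, h1⟩, hirr⟩ := hx
  have hinv : Irrational x⁻¹ := hirr.inv
  have hfr : Irrational (gaussMap x) := by
    have := hinv.sub_intCast ⌊x⁻¹⌋
    rw [gaussMap, Int.fract]
    exact this
  refine ⟨⟨?_, ?_⟩, hfr⟩
  · rcases eq_or_lt_of_le (Int.fract_nonneg x⁻¹) with h | h
    · exfalso
      have : Irrational (Int.fract x⁻¹) := by
        simpa [gaussMap] using hfr
      rw [← h] at this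
      exact this.ne_int 0 (by norm_num)
    · exact h
  · exact Int.fract_lt_one _

lemma gaussMap_iterate_mem_II {x : ℝ} (hx : x ∈ II) (j : ℕ) : gaussMap^[j] x ∈ II := by
  induction j with
  | zero => simpa using hx
  | succ j ih =>
      rw [Function.iterate_succ_apply']
      exact gaussMap_mem_II ih

lemma measurable_cfA (i : ℕ) : Measurable (fun α => cfA α i) :=
  ((measurable_gaussMap.iterate (i-1)).inv).nat_floor

lemma measurable_cfSumA (n : ℕ) : Measurable (fun α => cfSumA α n) := by
  unfold cfSumA
  exact Finset.measurable_sum _ (fun i _ => measurable_cfA i)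

noncomputable def wgt (x : ℝ) : ℝ≥0∞ := ENNReal.ofReal (1/(1+x))

noncomputable def nu : Measure ℝ := (volume.restrict (Set.Ioo 0 1)).withDensity wgt

lemma measurable_wgt : Measurable wgt := by
  apply ENNReal.measurable_ofReal.comp
  fun_prop

lemma nu_apply {A : Set ℝ} (hA : MeasurableSet A) :
    nu A = ∫⁻ x in A ∩ Set.Ioo 0 1, wgt x := by
  rw [nu, withDensity_apply _ hA, Measure.restrict_restrict hA]

lemma nu_apply_subset {A : Set ℝ} (hA : MeasurableSet A) (h : A ⊆ Set.Ioo 0 1) :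
    nu A = ∫⁻ x in A, wgt x := by
  rw [nu_apply hA, Set.inter_eq_self_of_subset_left h]

lemma nu_le_volume {A : Set ℝ} (hA : MeasurableSet A) : nu A ≤ volume A := by
  rw [nu_apply hA]
  calc ∫⁻ x in A ∩ Set.Ioo 0 1, wgt x ≤ ∫⁻ _ in A ∩ Set.Ioo 0 1, 1 := by
        refine setLIntegral_mono measurable_const (fun x hx => ?_)
        refine ENNReal.ofReal_le_one.mpr ?_
        have h0 : (0:ℝ) < x := hx.2.1
        rw [div_le_one (by linarith)]
        linarith
  _ = volume (A ∩ Set.Ioo 0 1) := by simp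
  _ ≤ volume A := measure_mono Set.inter_subset_left

lemma volume_le_two_nu {A : Set ℝ} (hA : MeasurableSet A) (h : A ⊆ Set.Ioo 0 1) :
    volume A ≤ 2 * nu A := by
  rw [nu_apply_subset hA h, ← lintegral_const_mul _ measurable_wgt]
  calc volume A = ∫⁻ _ in A, 1 := by simp
  _ ≤ ∫⁻ x in A, 2 * wgt x := by
      refine setLIntegral_mono (measurable_const.mul measurable_wgt) (fun x hx => ?_)
      obtain ⟨h0, h1⟩ := h hx
      have : (1:ℝ)/2 ≤ 1/(1+x) := by
        rw [div_le_div_iff₀ (by norm_num) (by linarith)]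
        linarith
      calc (1:ℝ≥0∞) = 2 * ENNReal.ofReal (1/2) := by
            rw [ENNReal.ofReal_div_of_pos (by norm_num)]
            simp [ENNReal.div_eq_inv_mul]
            rw [ENNReal.mul_inv_cancel (by norm_num) (by norm_num)]
      _ ≤ 2 * wgt x := by
            gcongr
            exact ENNReal.ofReal_le_ofReal this

lemma lintegral_image_eq_lintegral_abs_deriv_mul' {s : Set ℝ} {f f' : ℝ → ℝ}
    (hs : MeasurableSet s) (hf' : ∀ x ∈ s, HasDerivWithinAt f (f' x) s x)
    (hf : Set.InjOn f s) (g : ℝ → ℝ≥0∞) :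
    ∫⁻ x in f '' s, g x = ∫⁻ x in s, ENNReal.ofReal |f' x| * g (f x) := by
  simpa only [ContinuousLinearMap.det_toSpanSingleton] using
    MeasureTheory.lintegral_image_eq_lintegral_abs_det_fderiv_mul volume hs
      (fun x hx => (hf' x hx).hasFDerivWithinAt) hf g

lemma branch_image_eq {c : ℝ} (hc : 1 ≤ c) {E : Set ℝ} (hsub : E ⊆ Set.Ioo 0 1) :
    (fun y => (c+y)⁻¹) '' E = (fun x : ℝ => x⁻¹ - c) ⁻¹' E ∩ Set.Ioo (c+1)⁻¹ c⁻¹ := by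
  have hc0 : (0:ℝ) < c := by linarith
  ext x
  constructor
  · rintro ⟨y, hy, rfl⟩
    obtain ⟨h0, h1⟩ := hsub hy
    have hcy : (0:ℝ) < c + y := by linarith
    refine ⟨?_, ?_, ?_⟩
    · show ((c+y)⁻¹)⁻¹ - c ∈ E
      rw [inv_inv]
      have : c + y - c = y := by ring
      rw [this]
      exact hy
    · have h' : c + y < c + 1 := by linarith
      rw [inv_lt_inv₀ (by linarith) hcy]
      exact h'
    · have : (c + y)⁻¹ < c⁻¹ := by
        rw [inv_lt_inv₀ hcy hc0]
        linarith
      exact this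
  · rintro ⟨hxE, hx1, hx2⟩
    have hx0 : (0:ℝ) < x := lt_trans (by positivity) hx1
    refine ⟨x⁻¹ - c, hxE, ?_⟩
    show (c + (x⁻¹ - c))⁻¹ = x
    have : c + (x⁻¹ - c) = x⁻¹ := by ring
    rw [this, inv_inv]

lemma branch_bound {c : ℝ} (hc : 1 ≤ c) {E : Set ℝ} (hE : MeasurableSet E)
    (hsub : E ⊆ Set.Ioo 0 1) :
    nu ((fun y => (c+y)⁻¹) '' E) ≤ ∫⁻ y in E, ENNReal.ofReal (1/((c+y)*(c+1+y))) := by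
  have hc0 : (0:ℝ) < c := by linarith
  have hmeas : MeasurableSet ((fun y => (c+y)⁻¹) '' E) := by
    rw [branch_image_eq hc hsub]
    exact ((measurable_inv.sub measurable_const) hE).inter measurableSet_Ioo
  have himg : (fun y => (c+y)⁻¹) '' E ⊆ Set.Ioo 0 1 := by
    rintro _ ⟨y, hy, rfl⟩
    obtain ⟨h0, h1⟩ := hsub hy
    have hcy : (0:ℝ) < c + y := by linarith
    refine ⟨by positivity, ?_⟩
    have h1' : (1:ℝ) < c + y := by linarith
    rw [inv_lt_one₀ hcy]
    exact h1'
  have hderiv : ∀ y ∈ E, HasDerivWithinAt (fun y => (c+y)⁻¹) (-(1/(c+y)^2)) E y := by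
    intro y hy
    obtain ⟨h0, h1⟩ := hsub hy
    have hcy : c + y ≠ 0 := by positivity
    have h1' : HasDerivWithinAt (fun y : ℝ => c + y) 1 E y :=
      (hasDerivWithinAt_id y E).const_add c
    have := h1'.inv hcy
    rw [← neg_div]
    exact this
  have hinj : Set.InjOn (fun y => (c+y)⁻¹) E := by
    intro a ha b hb hab
    simp only [inv_inj] at hab
    linarith
  rw [nu_apply_subset hmeas himg,
      lintegral_image_eq_lintegral_abs_deriv_mul' hE hderiv hinj wgt]
  refine le_of_eq (setLIntegral_congr_fun hE (fun y hy => ?_))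
  obtain ⟨h0, h1⟩ := hsub hy
  have hcy : (0:ℝ) < c + y := by linarith
  rw [wgt, abs_neg, abs_of_nonneg (by positivity),
      ← ENNReal.ofReal_mul (by positivity)]
  congr 1
  field_simp
  ring

lemma tele_sum {y : ℝ} (hy : 0 < y) :
    ∑' k : ℕ, ENNReal.ofReal (1/((((k:ℝ)+1)+y)*(((k:ℝ)+1)+1+y))) = ENNReal.ofReal (1/(1+y)) := by
  set f : ℕ → ℝ := fun k => 1/((((k:ℝ)+1)+y)*(((k:ℝ)+1)+1+y)) with hfdef
  have hnn : ∀ k : ℕ, 0 ≤ f k := fun k => by positivity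
  have hs : HasSum f (1/(1+y)) := by
    rw [hasSum_iff_tendsto_nat_of_nonneg hnn]
    have hps : ∀ K : ℕ, ∑ k ∈ Finset.range K, f k = 1/(1+y) - 1/((K:ℝ)+1+y) := by
      intro K
      have h1 : ∀ k ∈ Finset.range K, f k =
          (fun m : ℕ => 1/((m:ℝ)+1+y)) k - (fun m : ℕ => 1/((m:ℝ)+1+y)) (k+1) := by
        intro k _
        have hk1 : (0:ℝ) < (k:ℝ)+1+y := by positivity
        have hk2 : (0:ℝ) < (k:ℝ)+1+1+y := by positivity
        show f k = 1/((k:ℝ)+1+y) - 1/(((k+1:ℕ):ℝ)+1+y)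
        rw [hfdef]
        push_cast
        field_simp
        try ring
      rw [Finset.sum_congr rfl h1, Finset.sum_range_sub' (fun m : ℕ => 1/((m:ℝ)+1+y))]
      norm_num
    have hlim : Filter.Tendsto (fun K : ℕ => 1/(1+y) - 1/((K:ℝ)+1+y)) Filter.atTop
        (nhds (1/(1+y) - 0)) := by
      refine Filter.Tendsto.const_sub _ ?_
      simp only [one_div]
      refine Filter.Tendsto.inv_tendsto_atTop ?_
      exact tendsto_atTop_add_const_right _ y
        (tendsto_atTop_add_const_right _ 1 tendsto_natCast_atTop_atTop)
    rw [sub_zero] at hlim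
    refine hlim.congr (fun K => ?_)
    rw [hps K]
  rw [← ENNReal.ofReal_tsum_of_nonneg hnn hs.summable, hs.tsum_eq]

lemma nu_preimage_le {E : Set ℝ} (hE : MeasurableSet E) (hsub : E ⊆ Set.Ioo 0 1) :
    nu (gaussMap ⁻¹' E ∩ II) ≤ nu E := by
  have cover : gaussMap ⁻¹' E ∩ II ⊆ ⋃ k : ℕ, (fun y => (((k:ℝ)+1)+y)⁻¹) '' E := by
    rintro x ⟨hxE, hxI⟩
    obtain ⟨⟨h0, h1⟩, hirr⟩ := hxI
    have hx1 : 1 < x⁻¹ := (one_lt_inv₀ h0).mpr h1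
    have hk1 : 1 ≤ ⌊x⁻¹⌋ := by
      rw [Int.le_floor]
      exact_mod_cast hx1.le
    refine Set.mem_iUnion.mpr ⟨(⌊x⁻¹⌋ - 1).toNat, ⟨gaussMap x, hxE, ?_⟩⟩
    have hc : (((⌊x⁻¹⌋ - 1).toNat : ℕ) : ℝ) = (⌊x⁻¹⌋ : ℝ) - 1 := by
      have h : (((⌊x⁻¹⌋ - 1).toNat : ℕ) : ℤ) = ⌊x⁻¹⌋ - 1 := Int.toNat_of_nonneg (by omega)
      exact_mod_cast h
    show ((((⌊x⁻¹⌋ - 1).toNat : ℕ) : ℝ) + 1 + gaussMap x)⁻¹ = x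
    rw [hc, gaussMap, Int.fract]
    have : (⌊x⁻¹⌋ : ℝ) - 1 + 1 + (x⁻¹ - ⌊x⁻¹⌋) = x⁻¹ := by ring
    rw [this, inv_inv]
  have hmono : nu (gaussMap ⁻¹' E ∩ II) ≤ nu (⋃ k : ℕ, (fun y => (((k:ℝ)+1)+y)⁻¹) '' E) :=
    measure_mono cover
  refine hmono.trans ((measure_iUnion_le _).trans ?_)
  have hstep : ∀ k : ℕ, nu ((fun y => (((k:ℝ)+1)+y)⁻¹) '' E)
      ≤ ∫⁻ y in E, ENNReal.ofReal (1/((((k:ℝ)+1)+y)*(((k:ℝ)+1)+1+y))) := fun k =>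
    branch_bound (by linarith [(Nat.cast_nonneg k : (0:ℝ) ≤ k)]) hE hsub
  refine (ENNReal.tsum_le_tsum hstep).trans ?_
  have hmeasind : ∀ k : ℕ,
      Measurable fun y : ℝ => ENNReal.ofReal (1/((((k:ℝ)+1)+y)*(((k:ℝ)+1)+1+y))) := by
    intro k
    apply ENNReal.measurable_ofReal.comp
    fun_prop
  rw [← lintegral_tsum (fun k => (hmeasind k).aemeasurable), nu_apply_subset hE hsub]
  refine le_of_eq (setLIntegral_congr_fun hE (fun y hy => ?_))
  rw [wgt]
  exact tele_sum (hsub hy).1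

lemma nu_iterate_le (j : ℕ) {E : Set ℝ} (hE : MeasurableSet E) (hsub : E ⊆ Set.Ioo 0 1) :
    nu ((gaussMap^[j]) ⁻¹' E ∩ II) ≤ nu E := by
  induction j generalizing E with
  | zero =>
      simp only [Function.iterate_zero, Set.preimage_id]
      exact measure_mono Set.inter_subset_left
  | succ j ih =>
      have hE' : MeasurableSet ((gaussMap^[j]) ⁻¹' E ∩ II) :=
        ((measurable_gaussMap.iterate j) hE).inter measurableSet_II
      have hsub' : (gaussMap^[j]) ⁻¹' E ∩ II ⊆ Set.Ioo 0 1 := fun x hx => hx.2.1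
      have hcov : (gaussMap^[j+1]) ⁻¹' E ∩ II ⊆
          gaussMap ⁻¹' ((gaussMap^[j]) ⁻¹' E ∩ II) ∩ II := by
        rintro x ⟨hxE, hxI⟩
        have hGx := gaussMap_mem_II hxI
        rw [Set.mem_preimage, Function.iterate_succ_apply] at hxE
        exact ⟨⟨hxE, hGx⟩, hxI⟩
      calc nu ((gaussMap^[j+1]) ⁻¹' E ∩ II)
          ≤ nu (gaussMap ⁻¹' ((gaussMap^[j]) ⁻¹' E ∩ II) ∩ II) := measure_mono hcov
        _ ≤ nu ((gaussMap^[j]) ⁻¹' E ∩ II) := nu_preimage_le hE' hsub'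
        _ ≤ nu E := ih hE hsub

lemma tail_bound (j : ℕ) {c : ℝ} (hc0 : 0 < c) (hc1 : c ≤ 1) :
    volume {x | x ∈ II ∧ gaussMap^[j] x < c} ≤ ENNReal.ofReal (2*c) := by
  have hSeq : {x | x ∈ II ∧ gaussMap^[j] x < c} = II ∩ (gaussMap^[j]) ⁻¹' (Set.Iio c) := rfl
  have hSm : MeasurableSet {x | x ∈ II ∧ gaussMap^[j] x < c} := by
    rw [hSeq]
    exact measurableSet_II.inter ((measurable_gaussMap.iterate j) measurableSet_Iio)
  have hSsub : {x | x ∈ II ∧ gaussMap^[j] x < c} ⊆ Set.Ioo 0 1 := fun x hx => hx.1.1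
  have hsub2 : {x | x ∈ II ∧ gaussMap^[j] x < c} ⊆
      (gaussMap^[j]) ⁻¹' (Set.Ioo 0 c) ∩ II := by
    rintro x ⟨hxI, hxc⟩
    exact ⟨⟨(gaussMap_iterate_mem_II hxI j).1.1, hxc⟩, hxI⟩
  calc volume {x | x ∈ II ∧ gaussMap^[j] x < c}
      ≤ 2 * nu {x | x ∈ II ∧ gaussMap^[j] x < c} := volume_le_two_nu hSm hSsub
    _ ≤ 2 * nu ((gaussMap^[j]) ⁻¹' (Set.Ioo 0 c) ∩ II) :=
        mul_le_mul_right (measure_mono hsub2) 2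
    _ ≤ 2 * nu (Set.Ioo 0 c) :=
        mul_le_mul_right (nu_iterate_le j measurableSet_Ioo
          (Set.Ioo_subset_Ioo le_rfl hc1)) 2
    _ ≤ 2 * volume (Set.Ioo 0 c) := mul_le_mul_right (nu_le_volume measurableSet_Ioo) 2
    _ = ENNReal.ofReal (2*c) := by
        rw [Real.volume_Ioo, sub_zero, ← ENNReal.ofReal_ofNat,
          ← ENNReal.ofReal_mul (by norm_num)]

lemma cfA_tail {i t : ℕ} (hi : 1 ≤ i) (ht : 1 ≤ t) :
    volume {x | x ∈ II ∧ t ≤ cfA x i} ≤ ENNReal.ofReal (2 / t) := by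
  have ht0 : (0:ℝ) < t := by exact_mod_cast ht
  have hsub : {x | x ∈ II ∧ t ≤ cfA x i} ⊆ {x | x ∈ II ∧ gaussMap^[i-1] x < (t:ℝ)⁻¹} := by
    rintro x ⟨hxI, hxt⟩
    refine ⟨hxI, ?_⟩
    have hyI : gaussMap^[i-1] x ∈ II := gaussMap_iterate_mem_II hxI _
    have hy0 : 0 < gaussMap^[i-1] x := hyI.1.1
    have hty : (t:ℝ) ≤ (gaussMap^[i-1] x)⁻¹ := by
      have h := (Nat.le_floor_iff (by positivity)).mp hxt
      exact_mod_cast h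
    have hle : gaussMap^[i-1] x ≤ (t:ℝ)⁻¹ := by
      have h2 := inv_anti₀ ht0 hty
      rwa [inv_inv] at h2
    refine lt_of_le_of_ne hle ?_
    intro h
    exact hyI.2 ⟨(t:ℚ)⁻¹, by push_cast; rw [h]⟩
  calc volume {x | x ∈ II ∧ t ≤ cfA x i}
      ≤ volume {x | x ∈ II ∧ gaussMap^[i-1] x < (t:ℝ)⁻¹} := measure_mono hsub
    _ ≤ ENNReal.ofReal (2 * (t:ℝ)⁻¹) :=
        tail_bound (i-1) (by positivity) (by
          rw [inv_le_one_iff₀]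
          right
          exact_mod_cast ht)
    _ = ENNReal.ofReal (2 / t) := by rw [div_eq_mul_inv]

lemma min_eq_sum (a T : ℕ) : min a T = ∑ t ∈ Finset.Icc 1 T, (if t ≤ a then 1 else 0) := by
  rw [← Finset.card_filter]
  have h : (Finset.Icc 1 T).filter (fun t => t ≤ a) = Finset.Icc 1 (min a T) := by
    ext t
    simp only [Finset.mem_filter, Finset.mem_Icc]
    omega
  rw [h, Nat.card_Icc]
  omega

lemma log_ge_four {n : ℕ} (hn : 55 ≤ n) : (4:ℝ) ≤ Real.log n := by
  have hexp : Real.exp 4 < 55 := by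
    have h1 := Real.exp_one_lt_d9
    have h2 : Real.exp 4 = (Real.exp 1)^(4:ℕ) := by
      rw [← Real.exp_nat_mul]
      norm_num
    rw [h2]
    calc (Real.exp 1)^(4:ℕ) ≤ 2.7182818286^(4:ℕ) :=
          pow_le_pow_left₀ (Real.exp_pos 1).le h1.le 4
    _ < 55 := by norm_num
  have h55 : (4:ℝ) ≤ Real.log 55 := (Real.le_log_iff_exp_le (by norm_num)).mpr hexp.le
  refine h55.trans (Real.log_le_log (by norm_num) ?_)
  exact_mod_cast hn

lemma main_bound {n : ℕ} (hn : 55 ≤ n) :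
    ENNReal.ofReal (1/2) ≤ volume {x | x ∈ II ∧ (cfSumA x n : ℝ) < 12 * n * Real.log n} := by
  have hn0 : 0 < n := by omega
  have hn0R : (0:ℝ) < n := by exact_mod_cast hn0
  have hL : (4:ℝ) ≤ Real.log n := log_ge_four hn
  have hc0 : (0:ℝ) < 12 * n * Real.log n := by nlinarith
  set T : ℕ := n^2 with hT
  -- the "hit" sets and their measure bound
  have hmeasHit : ∀ i t : ℕ, MeasurableSet {z : ℝ | z ∈ II ∧ t ≤ cfA z i} := by
    intro i t
    exact measurableSet_II.inter ((measurable_cfA i) measurableSet_Ici)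
  -- Bad1
  set Bad1 : Set ℝ := ⋃ i ∈ Finset.Icc 1 n, {z : ℝ | z ∈ II ∧ T + 1 ≤ cfA z i} with hBad1def
  have hBad1 : volume Bad1 ≤ ENNReal.ofReal (2/n) := by
    calc volume Bad1 ≤ ∑ i ∈ Finset.Icc 1 n, volume {z : ℝ | z ∈ II ∧ T + 1 ≤ cfA z i} :=
          measure_biUnion_finset_le _ _
    _ ≤ ∑ i ∈ Finset.Icc 1 n, ENNReal.ofReal (2/(T+1:ℕ)) := by
          refine Finset.sum_le_sum fun i hi => ?_
          exact cfA_tail (Finset.mem_Icc.mp hi).1 (by omega)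
    _ = (n : ℝ≥0∞) * ENNReal.ofReal (2/(T+1:ℕ)) := by
          rw [Finset.sum_const, Nat.card_Icc]
          simp [nsmul_eq_mul]
    _ = ENNReal.ofReal (n * (2/(T+1:ℕ))) := by
          rw [ENNReal.ofReal_mul (by positivity), ENNReal.ofReal_natCast]
    _ ≤ ENNReal.ofReal (2/n) := by
          refine ENNReal.ofReal_le_ofReal ?_
          have hTpos : (0:ℝ) < ((T:ℕ):ℝ) + 1 := by positivity
          have hcast : ((T + 1 : ℕ):ℝ) = (n:ℝ)^2 + 1 := by push_cast [hT]; ring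
          have h2 : (n:ℝ) * (2/((n:ℝ)^2+1)) = 2*(n:ℝ)/((n:ℝ)^2+1) := by ring
          rw [hcast, h2, div_le_div_iff₀ (by positivity) hn0R]
          nlinarith
  -- the counting function
  set F : ℝ → ℝ≥0∞ := fun x => ∑ i ∈ Finset.Icc 1 n, ∑ t ∈ Finset.Icc 1 T,
    Set.indicator {z : ℝ | z ∈ II ∧ t ≤ cfA z i} (fun _ => (1:ℝ≥0∞)) x with hFdef
  have hFmeas : Measurable F := by
    refine Finset.measurable_sum _ fun i _ => Finset.measurable_sum _ fun t _ => ?_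
    exact measurable_const.indicator (hmeasHit i t)
  have hFeq : ∀ x, x ∈ II → ((∑ i ∈ Finset.Icc 1 n, min (cfA x i) T : ℕ) : ℝ≥0∞) = F x := by
    intro x hx
    rw [hFdef]
    push_cast
    refine Finset.sum_congr rfl fun i _ => ?_
    rw [min_eq_sum]
    push_cast
    refine Finset.sum_congr rfl fun t _ => ?_
    by_cases h : t ≤ cfA x i
    · simp [Set.indicator_of_mem, h, Set.mem_setOf_eq, hx]
    · simp [Set.indicator_of_notMem, h, Set.mem_setOf_eq]
  have hlinF : ∫⁻ x, F x = ∑ i ∈ Finset.Icc 1 n, ∑ t ∈ Finset.Icc 1 T,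
      volume {z : ℝ | z ∈ II ∧ t ≤ cfA z i} := by
    rw [hFdef, lintegral_finset_sum _ (fun i _ =>
      Finset.measurable_sum _ fun t _ => measurable_const.indicator (hmeasHit i t))]
    refine Finset.sum_congr rfl fun i _ => ?_
    rw [lintegral_finset_sum _ (fun t _ => measurable_const.indicator (hmeasHit i t))]
    refine Finset.sum_congr rfl fun t _ => ?_
    exact lintegral_indicator_one (hmeasHit i t)
  have hHsum : ∑ t ∈ Finset.Icc 1 T, 2/(t:ℝ) ≤ 2*(1 + Real.log T) := by
    have h1 : ∑ t ∈ Finset.Icc 1 T, 2/(t:ℝ) = 2 * ∑ t ∈ Finset.Icc 1 T, ((t:ℝ))⁻¹ := by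
      rw [Finset.mul_sum]
      exact Finset.sum_congr rfl fun t _ => by ring
    have h2 : ∑ t ∈ Finset.Icc 1 T, ((t:ℝ))⁻¹ = (harmonic T : ℝ) := by
      rw [← Finset.Ico_add_one_right_eq_Icc, Finset.sum_Ico_eq_sum_range]
      try simp only [Nat.add_sub_cancel]
      rw [harmonic]
      push_cast
      exact Finset.sum_congr rfl fun i _ => by rw [add_comm]
    rw [h1, h2]
    have := harmonic_le_one_add_log T
    linarith
  have hintF : ∫⁻ x, F x ≤ ENNReal.ofReal (n * (2*(1 + Real.log T))) := by
    rw [hlinF]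
    calc ∑ i ∈ Finset.Icc 1 n, ∑ t ∈ Finset.Icc 1 T, volume {z : ℝ | z ∈ II ∧ t ≤ cfA z i}
        ≤ ∑ i ∈ Finset.Icc 1 n, ∑ t ∈ Finset.Icc 1 T, ENNReal.ofReal (2/(t:ℝ)) := by
          refine Finset.sum_le_sum fun i hi => Finset.sum_le_sum fun t ht => ?_
          exact cfA_tail (Finset.mem_Icc.mp hi).1 (Finset.mem_Icc.mp ht).1
    _ = ∑ i ∈ Finset.Icc 1 n, ENNReal.ofReal (∑ t ∈ Finset.Icc 1 T, 2/(t:ℝ)) := by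
          refine Finset.sum_congr rfl fun i _ => ?_
          rw [ENNReal.ofReal_sum_of_nonneg (fun t _ => by positivity)]
    _ ≤ ∑ i ∈ Finset.Icc 1 n, ENNReal.ofReal (2*(1 + Real.log T)) := by
          refine Finset.sum_le_sum fun i _ => ENNReal.ofReal_le_ofReal hHsum
    _ = (n : ℝ≥0∞) * ENNReal.ofReal (2*(1 + Real.log T)) := by
          rw [Finset.sum_const, Nat.card_Icc]
          simp [nsmul_eq_mul]
    _ = ENNReal.ofReal ((n:ℝ)) * ENNReal.ofReal (2*(1 + Real.log T)) := by
          rw [ENNReal.ofReal_natCast]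
    _ = ENNReal.ofReal (n * (2*(1 + Real.log T))) :=
          (ENNReal.ofReal_mul (by positivity)).symm
  -- Bad2 bound via Chebyshev
  set Bad2 : Set ℝ := {x : ℝ | x ∈ II ∧ 12 * n * Real.log n ≤
      ((∑ i ∈ Finset.Icc 1 n, min (cfA x i) T : ℕ) : ℝ)} with hBad2def
  have hBad2 : volume Bad2 ≤ ENNReal.ofReal (1/24 + 1/3) := by
    have hsub : Bad2 ⊆ {x : ℝ | ENNReal.ofReal (12 * n * Real.log n) ≤ F x} := by
      rintro x ⟨hxI, hxc⟩
      have h1 : ENNReal.ofReal (12 * n * Real.log n) ≤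
          ((∑ i ∈ Finset.Icc 1 n, min (cfA x i) T : ℕ) : ℝ≥0∞) := by
        rw [← ENNReal.ofReal_natCast]
        exact ENNReal.ofReal_le_ofReal hxc
      exact h1.trans_eq (hFeq x hxI)
    calc volume Bad2 ≤ volume {x : ℝ | ENNReal.ofReal (12 * n * Real.log n) ≤ F x} :=
          measure_mono hsub
    _ ≤ (∫⁻ x, F x) / ENNReal.ofReal (12 * n * Real.log n) :=
          meas_ge_le_lintegral_div hFmeas.aemeasurable
            (by simp [ENNReal.ofReal_pos.mpr hc0, (ENNReal.ofReal_pos.mpr hc0).ne', hn0.ne', (by linarith : (0:ℝ) < Real.log n)])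
            ENNReal.ofReal_ne_top
    _ ≤ ENNReal.ofReal (n * (2*(1 + Real.log T))) / ENNReal.ofReal (12 * n * Real.log n) :=
          ENNReal.div_le_div_right hintF _
    _ = ENNReal.ofReal ((n * (2*(1 + Real.log T))) / (12 * n * Real.log n)) :=
          (ENNReal.ofReal_div_of_pos hc0).symm
    _ ≤ ENNReal.ofReal (1/24 + 1/3) := by
          refine ENNReal.ofReal_le_ofReal ?_
          have hlogT : Real.log T = 2 * Real.log n := by
            rw [hT]
            push_cast
            rw [Real.log_pow]
            push_cast
            ring
          rw [hlogT]
          have hLpos : (0:ℝ) < Real.log n := by linarith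
          rw [div_le_iff₀ (by positivity)]
          have hexpand : (n:ℝ) * (2*(1 + 2 * Real.log n)) =
              2*(n:ℝ) + 4*(n:ℝ)*Real.log n := by ring
          nlinarith
  -- combine
  have hcover : II ⊆ {x | x ∈ II ∧ (cfSumA x n : ℝ) < 12 * n * Real.log n} ∪ (Bad1 ∪ Bad2) := by
    intro x hx
    rcases lt_or_ge ((cfSumA x n : ℝ)) (12 * n * Real.log n) with h | h
    · exact Or.inl ⟨hx, h⟩
    · by_cases hb1 : x ∈ Bad1
      · exact Or.inr (Or.inl hb1)
      · refine Or.inr (Or.inr ⟨hx, ?_⟩)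
        have hall : ∀ i ∈ Finset.Icc 1 n, cfA x i ≤ T := by
          intro i hi
          by_contra hcon
          exact hb1 (Set.mem_biUnion hi ⟨hx, by omega⟩)
        have : ∑ i ∈ Finset.Icc 1 n, min (cfA x i) T = cfSumA x n := by
          rw [cfSumA]
          exact Finset.sum_congr rfl fun i hi => min_eq_left (hall i hi)
        rw [this]
        exact h
  have hbadtot : volume (Bad1 ∪ Bad2) ≤ ENNReal.ofReal (1/2) := by
    calc volume (Bad1 ∪ Bad2) ≤ volume Bad1 + volume Bad2 := measure_union_le _ _
    _ ≤ ENNReal.ofReal (2/n) + ENNReal.ofReal (1/24 + 1/3) := add_le_add hBad1 hBad2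
    _ = ENNReal.ofReal (2/n + (1/24 + 1/3)) := by
          rw [← ENNReal.ofReal_add (by positivity : (0:ℝ) ≤ 2/(n:ℝ))
              (by norm_num : (0:ℝ) ≤ 1/24+1/3)]
    _ ≤ ENNReal.ofReal (1/2) := by
          refine ENNReal.ofReal_le_ofReal ?_
          have h55 : (55:ℝ) ≤ n := by exact_mod_cast hn
          have : (2:ℝ)/n ≤ 2/55 := by
            rw [div_le_div_iff₀ hn0R (by norm_num)]
            linarith
          linarith
  have hone : (1:ℝ≥0∞) ≤ volume {x | x ∈ II ∧ (cfSumA x n : ℝ) < 12 * n * Real.log n}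
      + ENNReal.ofReal (1/2) := by
    calc (1:ℝ≥0∞) = volume II := volume_II.symm
    _ ≤ volume ({x | x ∈ II ∧ (cfSumA x n : ℝ) < 12 * n * Real.log n} ∪ (Bad1 ∪ Bad2)) :=
          measure_mono hcover
    _ ≤ volume {x | x ∈ II ∧ (cfSumA x n : ℝ) < 12 * n * Real.log n} + volume (Bad1 ∪ Bad2) :=
          measure_union_le _ _
    _ ≤ _ := add_le_add le_rfl hbadtot
  have h1 : (1:ℝ≥0∞) = ENNReal.ofReal (1/2) + ENNReal.ofReal (1/2) := by
    rw [← ENNReal.ofReal_add (by norm_num) (by norm_num)]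
    norm_num
  rw [h1] at hone
  exact (ENNReal.add_le_add_iff_right ENNReal.ofReal_ne_top).mp hone

lemma dN_nonneg (S : Set ℕ) (N : ℕ) :
    0 ≤ (∑ n ∈ Finset.Icc 1 N, Set.indicator S (fun _ => (1 : ℝ)) n) / N := by
  refine div_nonneg (Finset.sum_nonneg fun m _ => ?_) (Nat.cast_nonneg N)
  exact Set.indicator_nonneg (fun _ _ => by norm_num) m

lemma dN_le_one (S : Set ℕ) (N : ℕ) :
    (∑ n ∈ Finset.Icc 1 N, Set.indicator S (fun _ => (1 : ℝ)) n) / N ≤ 1 := by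
  rcases Nat.eq_zero_or_pos N with rfl | hN
  · simp
  refine div_le_one_of_le₀ ?_ (Nat.cast_nonneg N)
  calc ∑ n ∈ Finset.Icc 1 N, Set.indicator S (fun _ => (1 : ℝ)) n
      ≤ ∑ n ∈ Finset.Icc 1 N, 1 := by
        refine Finset.sum_le_sum fun m _ => ?_
        by_cases h : m ∈ S <;> simp [Set.indicator_apply, h]
  _ = ((Finset.Icc 1 N).card : ℝ) := by simp
  _ = (N : ℝ) := by rw [Nat.card_Icc]; simp

lemma tendsto_dN_zero (S : Set ℕ) (h : upperDensity S ≤ 0) :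
    Filter.Tendsto
      (fun N : ℕ => (∑ n ∈ Finset.Icc 1 N, Set.indicator S (fun _ => (1 : ℝ)) n) / N)
      Filter.atTop (nhds 0) := by
  set u : ℕ → ℝ := fun N => (∑ n ∈ Finset.Icc 1 N, Set.indicator S (fun _ => (1 : ℝ)) n) / N
  have hbdd : Filter.IsBoundedUnder (· ≤ ·) Filter.atTop u :=
    Filter.isBoundedUnder_of ⟨1, fun N => dN_le_one S N⟩
  rw [tendsto_order]
  constructor
  · intro a ha
    exact Filter.Eventually.of_forall fun N => lt_of_lt_of_le ha (dN_nonneg S N)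
  · intro b hb
    refine Filter.eventually_lt_of_limsup_lt ?_ hbdd
    exact lt_of_le_of_lt h hb

lemma assembly (Q : ℕ → ℝ → Prop)
    (hQmeas : ∀ m, MeasurableSet {α : ℝ | Q m α})
    (hQbig : ∀ m, 55 ≤ m → ENNReal.ofReal (1/2) ≤ volume {x : ℝ | x ∈ II ∧ Q m x}) :
    0 < volume {α : ℝ | α ∈ Set.Ioo (0 : ℝ) 1 ∧ Irrational α ∧
      0 < upperDensity {m : ℕ | 1 ≤ m ∧ Q m α}} := by
  by_contra hcon
  push_neg at hcon
  have hzero : volume {α : ℝ | α ∈ Set.Ioo (0 : ℝ) 1 ∧ Irrational α ∧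
      0 < upperDensity {m : ℕ | 1 ≤ m ∧ Q m α}} = 0 := le_antisymm hcon zero_le
  set μ : Measure ℝ := volume.restrict (Set.Ioo 0 1) with hμdef
  have hQmeas' : ∀ m : ℕ, MeasurableSet {α : ℝ | m ∈ {k : ℕ | 1 ≤ k ∧ Q k α}} := by
    intro m
    by_cases hm : 1 ≤ m
    · have h : {α : ℝ | m ∈ {k : ℕ | 1 ≤ k ∧ Q k α}} = {α : ℝ | Q m α} := by
        ext α; simp [Set.mem_setOf_eq, hm]
      rw [h]; exact hQmeas m
    · have h : {α : ℝ | m ∈ {k : ℕ | 1 ≤ k ∧ Q k α}} = ∅ := by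
        ext α; simp [Set.mem_setOf_eq, hm]
      rw [h]; exact MeasurableSet.empty
  set u : ℕ → ℝ → ℝ := fun N α =>
    (∑ n ∈ Finset.Icc 1 N, Set.indicator {k : ℕ | 1 ≤ k ∧ Q k α} (fun _ => (1 : ℝ)) n) / N
    with hudef
  have hswap : ∀ (α : ℝ) (m : ℕ),
      Set.indicator {k : ℕ | 1 ≤ k ∧ Q k α} (fun _ => (1 : ℝ)) m
        = Set.indicator {β : ℝ | m ∈ {k : ℕ | 1 ≤ k ∧ Q k β}} (fun _ => (1 : ℝ)) α := by
    intro α m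
    by_cases h : m ∈ {k : ℕ | 1 ≤ k ∧ Q k α}
    · rw [Set.indicator_of_mem h, Set.indicator_of_mem
        (show α ∈ {β : ℝ | m ∈ {k : ℕ | 1 ≤ k ∧ Q k β}} from h)]
    · rw [Set.indicator_of_notMem h, Set.indicator_of_notMem
        (show α ∉ {β : ℝ | m ∈ {k : ℕ | 1 ≤ k ∧ Q k β}} from h)]
  have humeas : ∀ N, Measurable (u N) := by
    intro N
    refine Measurable.div_const ?_ _
    have h : (fun α => ∑ n ∈ Finset.Icc 1 N,
        Set.indicator {k : ℕ | 1 ≤ k ∧ Q k α} (fun _ => (1:ℝ)) n)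
        = fun α => ∑ n ∈ Finset.Icc 1 N,
            Set.indicator {β : ℝ | n ∈ {k : ℕ | 1 ≤ k ∧ Q k β}} (fun _ => (1 : ℝ)) α := by
      funext α; exact Finset.sum_congr rfl fun m _ => hswap α m
    rw [h]
    exact Finset.measurable_sum _ fun m _ => (measurable_const.indicator (hQmeas' m))
  set G : ℕ → ℝ → ℝ≥0∞ := fun N α => ENNReal.ofReal (u N α) with hGdef
  have hae : ∀ᵐ α ∂μ, Filter.Tendsto (fun N => G N α) Filter.atTop
      (nhds ((fun _ : ℝ => (0:ℝ≥0∞)) α)) := by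
    have h1 : ∀ᵐ α ∂μ, Irrational α := by
      have hset : {α : ℝ | ¬ Irrational α} = Set.range ((↑) : ℚ → ℝ) := by
        ext α; simp [Irrational, not_not]
      have h0 : μ {α : ℝ | ¬ Irrational α} = 0 := by
        rw [hμdef, Measure.restrict_apply' measurableSet_Ioo]
        refine measure_mono_null Set.inter_subset_left ?_
        rw [hset]
        exact (Set.countable_range _).measure_zero _
      exact ae_iff.mpr (by simpa only [not_not] using h0)
    have h2 : ∀ᵐ α ∂μ, α ∈ Set.Ioo (0:ℝ) 1 := ae_restrict_mem measurableSet_Ioo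
    have h3 : ∀ᵐ α ∂μ, ¬(α ∈ Set.Ioo (0 : ℝ) 1 ∧ Irrational α ∧
        0 < upperDensity {m : ℕ | 1 ≤ m ∧ Q m α}) := by
      have hμ0 : μ {α : ℝ | α ∈ Set.Ioo (0 : ℝ) 1 ∧ Irrational α ∧
          0 < upperDensity {m : ℕ | 1 ≤ m ∧ Q m α}} = 0 := by
        rw [hμdef, Measure.restrict_apply' measurableSet_Ioo]
        exact measure_mono_null Set.inter_subset_left hzero
      refine ae_iff.mpr ?_
      simpa only [not_not] using hμ0
    filter_upwards [h1, h2, h3] with α hα1 hα2 hα3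
    have hud : upperDensity {m : ℕ | 1 ≤ m ∧ Q m α} ≤ 0 := by
      by_contra hpos
      push_neg at hpos
      exact hα3 ⟨hα2, hα1, hpos⟩
    have h4 : Filter.Tendsto (fun N => u N α) Filter.atTop (nhds 0) :=
      tendsto_dN_zero _ hud
    have h5 := (ENNReal.continuous_ofReal.tendsto 0).comp h4
    simpa [hGdef, Function.comp_def] using h5
  have hGmeas : ∀ N, Measurable (G N) := fun N => ENNReal.measurable_ofReal.comp (humeas N)
  have hGbound : ∀ N, ∀ᵐ α ∂μ, G N α ≤ (fun _ => (1:ℝ≥0∞)) α := by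
    intro N
    refine Filter.Eventually.of_forall fun α => ?_
    simp only [hGdef]
    calc ENNReal.ofReal (u N α) ≤ ENNReal.ofReal 1 :=
          ENNReal.ofReal_le_ofReal (dN_le_one _ N)
    _ = 1 := by norm_num
  have hfin : ∫⁻ _, (1:ℝ≥0∞) ∂μ ≠ ⊤ := by
    have h : ∫⁻ _, (1:ℝ≥0∞) ∂μ = volume (Set.Ioo (0:ℝ) 1) := by
      rw [lintegral_const, one_mul, hμdef, Measure.restrict_apply_univ]
    rw [h, Real.volume_Ioo]
    exact ENNReal.ofReal_ne_top
  have hdom : Filter.Tendsto (fun N => ∫⁻ α, G N α ∂μ) Filter.atTop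
      (nhds (∫⁻ x, (fun _ : ℝ => (0:ℝ≥0∞)) x ∂μ)) :=
    tendsto_lintegral_of_dominated_convergence _ hGmeas hGbound hfin hae
  rw [lintegral_zero] at hdom
  have hlow : ∀ N : ℕ, 162 ≤ N → ENNReal.ofReal (1/3) ≤ ∫⁻ α, G N α ∂μ := by
    intro N hN
    have hN0 : (0:ℝ) < N := by
      have : (162:ℝ) ≤ N := by exact_mod_cast hN
      linarith
    have hptw : ∀ α : ℝ,
        (∑ m ∈ Finset.Icc 55 N, Set.indicator {β : ℝ | Q m β} (fun _ => (1:ℝ≥0∞)) α)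
            / (N:ℝ≥0∞) ≤ G N α := by
      intro α
      have hreal : (∑ m ∈ Finset.Icc 55 N, Set.indicator {β : ℝ | Q m β} (fun _ => (1:ℝ)) α)
          ≤ ∑ n ∈ Finset.Icc 1 N,
              Set.indicator {k : ℕ | 1 ≤ k ∧ Q k α} (fun _ => (1 : ℝ)) n := by
        calc (∑ m ∈ Finset.Icc 55 N, Set.indicator {β : ℝ | Q m β} (fun _ => (1:ℝ)) α)
            ≤ ∑ m ∈ Finset.Icc 55 N,
                Set.indicator {k : ℕ | 1 ≤ k ∧ Q k α} (fun _ => (1:ℝ)) m := by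
              refine Finset.sum_le_sum fun m hm => ?_
              have hm55 : 55 ≤ m := (Finset.mem_Icc.mp hm).1
              by_cases h : α ∈ {β : ℝ | Q m β}
              · rw [Set.indicator_of_mem h,
                  Set.indicator_of_mem (show m ∈ {k : ℕ | 1 ≤ k ∧ Q k α} from ⟨by omega, h⟩)]
              · rw [Set.indicator_of_notMem h]
                exact Set.indicator_nonneg (fun _ _ => by norm_num) m
        _ ≤ _ := by
              refine Finset.sum_le_sum_of_subset_of_nonneg ?_ ?_
              · intro m hm
                rw [Finset.mem_Icc] at *
                omega
              · intro m _ _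
                exact Set.indicator_nonneg (fun _ _ => by norm_num) m
      have hconv : (∑ m ∈ Finset.Icc 55 N, Set.indicator {β : ℝ | Q m β} (fun _ => (1:ℝ≥0∞)) α)
          = ENNReal.ofReal
              (∑ m ∈ Finset.Icc 55 N, Set.indicator {β : ℝ | Q m β} (fun _ => (1:ℝ)) α) := by
        rw [ENNReal.ofReal_sum_of_nonneg
          (fun m _ => Set.indicator_nonneg (fun _ _ => by norm_num) α)]
        refine Finset.sum_congr rfl fun m _ => ?_
        by_cases h : α ∈ {β : ℝ | Q m β}
        · rw [Set.indicator_of_mem h, Set.indicator_of_mem h]; norm_num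
        · rw [Set.indicator_of_notMem h, Set.indicator_of_notMem h]; norm_num
      rw [hconv, show (N:ℝ≥0∞) = ENNReal.ofReal (N:ℝ) by rw [ENNReal.ofReal_natCast],
        ← ENNReal.ofReal_div_of_pos hN0]
      refine ENNReal.ofReal_le_ofReal ?_
      show _ ≤ (∑ n ∈ Finset.Icc 1 N,
          Set.indicator {k : ℕ | 1 ≤ k ∧ Q k α} (fun _ => (1:ℝ)) n) / (N:ℝ)
      gcongr
    have hμSm : ∀ m, 55 ≤ m → ENNReal.ofReal (1/2) ≤ μ {β : ℝ | Q m β} := by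
      intro m hm
      rw [hμdef, Measure.restrict_apply' measurableSet_Ioo]
      refine le_trans (hQbig m hm) (measure_mono ?_)
      rintro x ⟨hxI, hxQ⟩
      exact ⟨hxQ, hxI.1⟩
    have hint : ∫⁻ α, (∑ m ∈ Finset.Icc 55 N,
          Set.indicator {β : ℝ | Q m β} (fun _ => (1:ℝ≥0∞)) α) / (N:ℝ≥0∞) ∂μ
        = (∑ m ∈ Finset.Icc 55 N, μ {β : ℝ | Q m β}) / (N:ℝ≥0∞) := by
      simp_rw [div_eq_mul_inv]
      rw [lintegral_mul_const'' _
        (Finset.measurable_sum _ fun m _ =>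
          measurable_const.indicator (hQmeas m)).aemeasurable]
      congr 1
      rw [lintegral_finset_sum _ (fun m _ => measurable_const.indicator (hQmeas m))]
      exact Finset.sum_congr rfl fun m _ => lintegral_indicator_one (hQmeas m)
    have hcard : (Finset.Icc 55 N).card = N - 54 := by rw [Nat.card_Icc]; omega
    have hsum : ((N - 54:ℕ) : ℝ≥0∞) * ENNReal.ofReal (1/2)
        ≤ ∑ m ∈ Finset.Icc 55 N, μ {β : ℝ | Q m β} := by
      calc ((N-54:ℕ):ℝ≥0∞) * ENNReal.ofReal (1/2)
          = ∑ _m ∈ Finset.Icc 55 N, ENNReal.ofReal (1/2) := by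
            rw [Finset.sum_const, hcard, nsmul_eq_mul]
      _ ≤ _ := Finset.sum_le_sum fun m hm => hμSm m (Finset.mem_Icc.mp hm).1
    calc ENNReal.ofReal (1/3)
        ≤ ((N - 54:ℕ) : ℝ≥0∞) * ENNReal.ofReal (1/2) / (N:ℝ≥0∞) := by
          rw [ENNReal.le_div_iff_mul_le
            (Or.inl (by exact_mod_cast (by omega : (N:ℕ) ≠ 0)))
            (Or.inl (ENNReal.natCast_ne_top N))]
          rw [show (N:ℝ≥0∞) = ENNReal.ofReal (N:ℝ) by rw [ENNReal.ofReal_natCast],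
            show ((N-54:ℕ):ℝ≥0∞) = ENNReal.ofReal ((N-54:ℕ):ℝ) by rw [ENNReal.ofReal_natCast],
            ← ENNReal.ofReal_mul (by norm_num : (0:ℝ) ≤ 1/3),
            ← ENNReal.ofReal_mul (by positivity : (0:ℝ) ≤ ((N-54:ℕ):ℝ))]
          refine ENNReal.ofReal_le_ofReal ?_
          have hcast : ((N - 54:ℕ):ℝ) = (N:ℝ) - 54 := by
            rw [Nat.cast_sub (by omega)]
            norm_num
          have hNR : (162:ℝ) ≤ N := by exact_mod_cast hN
          rw [hcast]
          nlinarith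
      _ ≤ (∑ m ∈ Finset.Icc 55 N, μ {β : ℝ | Q m β}) / (N:ℝ≥0∞) :=
          ENNReal.div_le_div_right hsum _
      _ = ∫⁻ α, (∑ m ∈ Finset.Icc 55 N,
            Set.indicator {β : ℝ | Q m β} (fun _ => (1:ℝ≥0∞)) α) / (N:ℝ≥0∞) ∂μ := hint.symm
      _ ≤ ∫⁻ α, G N α ∂μ := lintegral_mono hptw
  have hev := hdom.eventually_lt_const
    (show (0:ℝ≥0∞) < ENNReal.ofReal (1/3) from ENNReal.ofReal_pos.mpr (by norm_num))
  obtain ⟨N, hN1, hN2⟩ := (hev.and (Filter.eventually_ge_atTop 162)).exists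
  exact absurd (hlow N hN2) (not_le.mpr hN1)


end Auxiliary

/-- For any strictly increasing sequence (n_t) of natural numbers, the set of
    irrational α ∈ (0,1) for which N_α = {m : A_{n_m}(α) < 12·n_m·log n_m} has positive
    upper density is of positive Lebesgue measure. -/
theorem stmt4 (nt : ℕ → ℕ) (hmono : StrictMono nt) (h1 : 1 ≤ nt 1) :
    0 < volume {α : ℝ | α ∈ Set.Ioo (0 : ℝ) 1 ∧ Irrational α ∧
      0 < upperDensity {m : ℕ | 1 ≤ m ∧
        (cfSumA α (nt m) : ℝ) < 12 * (nt m : ℝ) * Real.log (nt m)}} := by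
  refine assembly (fun m α => (cfSumA α (nt m) : ℝ) < 12 * (nt m : ℝ) * Real.log (nt m)) ?_ ?_
  · intro m
    have hmeas : Measurable fun α : ℝ => ((cfSumA α (nt m) : ℕ) : ℝ) :=
      measurable_from_top.comp (measurable_cfSumA (nt m))
    exact hmeas measurableSet_Iio
  · intro m hm
    have hnm : 55 ≤ nt m := le_trans hm (hmono.le_apply)
    exact main_bound hnm
end
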